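/- arXiv:2604.01629 — 10 statements merged into one kernel-verified Lean document; each statement's English description precedes it below -/
import Mathlib

section
/- Let m ≥ 1, α ∈ (0,1), and let (u_i, ũ_i)_{i=1}^m be reals with u_i ≠ ũ_i for all i. Form ξ_i, s_i, the conformal threshold τ and selection set S at level α, and define E_i = m·ξ_i·1{s_i ≤ τ} / (1 + Σ_{j=1}^m (1 − ξ_j)·1{s_j ≤ τ}) when τ > −∞, and E_i = 0 for all i when τ = −∞. Then the rejection set of the eBH procedure at level α applied to (E_1,…,E_m) equals S, i.e. R_eBH = {i : u_i ≤ min(ũ_i, τ)}. -/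
open MeasureTheory Finset

/-- Indicator `ξ_i = 1{u_i ≤ ũ_i}` (as a real number). -/
noncomputable def xiv {m : ℕ} (u ut : Fin m → ℝ) (i : Fin m) : ℝ :=
  if u i ≤ ut i then 1 else 0

/-- `s_i = min(u_i, ũ_i)`. -/
noncomputable def sv {m : ℕ} (u ut : Fin m → ℝ) (i : Fin m) : ℝ :=
  min (u i) (ut i)

/-- `Q(t) = (1 + Σ (1 − ξ_i)·1{s_i ≤ t}) / max(Σ ξ_i·1{s_i ≤ t}, 1)`. -/
noncomputable def Qfun {m : ℕ} (u ut : Fin m → ℝ) (t : ℝ) : ℝ :=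
  (1 + ∑ i, (1 - xiv u ut i) * (if sv u ut i ≤ t then 1 else 0)) /
    max (∑ i, xiv u ut i * (if sv u ut i ≤ t then 1 else 0)) 1

/-- The set `{t ∈ {u_1,…,u_m, ũ_1,…,ũ_m} : Q(t) ≤ α}`; `τ` is its max,
`τ = −∞` when it is empty. -/
noncomputable def thrCand {m : ℕ} (u ut : Fin m → ℝ) (α : ℝ) : Finset ℝ :=
  (Finset.univ.image u ∪ Finset.univ.image ut).filter (fun t => Qfun u ut t ≤ α)

/-- The selection set `S = {i : u_i ≤ min(ũ_i, τ)}`, with `S = ∅` when `τ = −∞`. -/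
noncomputable def selSet {m : ℕ} (u ut : Fin m → ℝ) (α : ℝ) : Finset (Fin m) :=
  if h : (thrCand u ut α).Nonempty then
    Finset.univ.filter (fun i => u i ≤ min (ut i) ((thrCand u ut α).max' h))
  else ∅

/-- `E_i = m·ξ_i·1{s_i ≤ τ} / (1 + Σ_j (1 − ξ_j)·1{s_j ≤ τ})` when `τ > −∞`,
and `E_i = 0` when `τ = −∞`. -/
noncomputable def evar {m : ℕ} (u ut : Fin m → ℝ) (α : ℝ) (i : Fin m) : ℝ :=
  if h : (thrCand u ut α).Nonempty then
    (m : ℝ) * xiv u ut i * (if sv u ut i ≤ (thrCand u ut α).max' h then 1 else 0) /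
      (1 + ∑ j, (1 - xiv u ut j) * (if sv u ut j ≤ (thrCand u ut α).max' h then 1 else 0))
  else 0

/-- `E_(k)`: the `k`-th largest value (1-indexed) among `E_1, …, E_m`. -/
noncomputable def orderStat {m : ℕ} (E : Fin m → ℝ) (k : ℕ) : ℝ :=
  ((List.ofFn E).mergeSort (fun a b => decide (b ≤ a))).getD (k - 1) 0

/-- The set `{k ∈ {1,…,m} : E_(k) ≥ m/(α·k)}`; `k̂` is its max. -/
noncomputable def kHatSet {m : ℕ} (E : Fin m → ℝ) (α : ℝ) : Finset ℕ :=
  (Finset.Icc 1 m).filter (fun k => (m : ℝ) / (α * k) ≤ orderStat E k)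

/-- The eBH rejection set `R_eBH = {i : E_i ≥ m/(α·k̂)}`, empty when no `k` qualifies. -/
noncomputable def eBHRej {m : ℕ} (E : Fin m → ℝ) (α : ℝ) : Finset (Fin m) :=
  if h : (kHatSet E α).Nonempty then
    Finset.univ.filter (fun i => (m : ℝ) / (α * (kHatSet E α).max' h) ≤ E i)
  else ∅


/-!
When `τ > −∞`, the e-values take only two values: `E_i = m / (1 + V)` on `S` and `0` off `S`,
where `V = Σ_j (1 − ξ_j)·1{s_j ≤ τ}`. Hence `E_(k) = m / (1 + V)` for `k ≤ |S|` and `E_(k) = 0`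
beyond. Since `Q(τ) ≤ α < 1`, the set `S` is nonempty and `1 + V ≤ α |S|`, which says exactly that
`E_(|S|) ≥ m / (α |S|)`. So `k̂ = |S|` and eBH rejects `S`. When `τ = −∞` every e-value
vanishes, and eBH rejects only positive e-values.
-/

namespace List

variable {α : Type*}

lemma getD_replicate_append_replicate (s n j : ℕ) (c d : α) :
    (replicate s c ++ replicate n d).getD j d = if j < s then c else d := by
  rw [getD_eq_getElem?_getD]
  by_cases hj : j < s
  · simp [getElem?_append_left, hj]
  · rw [getElem?_append_right (by simp; omega), getElem?_replicate, if_neg hj]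
    split_ifs <;> rfl

lemma mergeSort_ge_eq_replicate_append [LinearOrder α] {l : List α} {c d : α} (hdc : d ≤ c)
    (hl : ∀ x ∈ l, x = c ∨ x = d) :
    l.mergeSort (fun a b => decide (b ≤ a)) =
      replicate (l.count c) c ++ replicate (l.length - l.count c) d := by
  have hrest : l.filter (fun x => !(x == c)) = replicate (l.length - l.count c) d := by
    refine eq_replicate_iff.mpr ⟨?_, fun x hx => ?_⟩
    · have := l.length_eq_length_filter_add (· == c)
      rw [count_eq_length_filter]
      omega
    · rw [mem_filter] at hx
      exact (hl x hx.1).resolve_left (by simpa using hx.2)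
  have hperm : l.mergeSort (fun a b => decide (b ≤ a)) ~
      replicate (l.count c) c ++ replicate (l.length - l.count c) d := by
    rw [← filter_beq, ← hrest]
    exact (mergeSort_perm l _).trans (filter_append_perm _ l).symm
  refine hperm.eq_of_pairwise (fun a b _ _ hab hba => le_antisymm hba hab) ?_ ?_
  · simpa using pairwise_mergeSort (le := fun a b : α => decide (b ≤ a))
      (fun a b c hab hbc => by simp_all only [decide_eq_true_eq]; exact hbc.trans hab)
      (fun a b => by simpa using le_total b a) l
  · refine pairwise_append.mpr ⟨?_, ?_, fun a ha b hb => ?_⟩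
    · exact pairwise_replicate.mpr (Or.inr le_rfl)
    · exact pairwise_replicate.mpr (Or.inr le_rfl)
    · rw [eq_of_mem_replicate ha, eq_of_mem_replicate hb]; exact hdc

lemma count_ofFn_ite [Zero α] [DecidableEq α] {m : ℕ} (S : Finset (Fin m)) {c : α}
    (hc : c ≠ 0) : (ofFn fun i => if i ∈ S then c else 0).count c = S.card := by
  rw [← Multiset.coe_count, ← Fin.univ_val_map, Multiset.count_map, ← Finset.filter_val,
    Finset.card_val]
  congr 1
  ext i
  by_cases hi : i ∈ S <;> simp [hi, hc]

end List

lemma orderStat_ite {m : ℕ} (S : Finset (Fin m)) {c : ℝ} (hc : 0 < c) {k : ℕ} (hk : 1 ≤ k) :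
    orderStat (fun i => if i ∈ S then c else 0) k = if k ≤ S.card then c else 0 := by
  have hvals : ∀ x ∈ List.ofFn (fun i => if i ∈ S then c else 0), x = c ∨ x = 0 := by
    intro x hx
    obtain ⟨i, rfl⟩ := List.mem_ofFn.mp hx
    by_cases hi : i ∈ S <;> simp [hi]
  rw [orderStat, List.mergeSort_ge_eq_replicate_append hc.le hvals, List.count_ofFn_ite S hc.ne',
    List.getD_replicate_append_replicate]
  congr 1
  exact propext (by omega)

lemma pos_of_mem_eBHRej {m : ℕ} {E : Fin m → ℝ} {α : ℝ} (hα : 0 < α) {i : Fin m}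
    (hi : i ∈ eBHRej E α) : 0 < E i := by
  rw [eBHRej] at hi
  split_ifs at hi with hk
  · have hk1 : (1 : ℝ) ≤ (kHatSet E α).max' hk := by
      exact_mod_cast (mem_Icc.mp (mem_filter.mp ((kHatSet E α).max'_mem hk)).1).1
    have hm : (0 : ℝ) < m := by exact_mod_cast i.pos
    exact lt_of_lt_of_le (by positivity) (mem_filter.mp hi).2
  · simp at hi

lemma eBHRej_eq_empty_of_forall_eq_zero {m : ℕ} {E : Fin m → ℝ} {α : ℝ} (hα : 0 < α)
    (hE : ∀ i, E i = 0) : eBHRej E α = ∅ :=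
  eq_empty_of_forall_notMem fun i hi => (pos_of_mem_eBHRej hα hi).ne' (hE i)

section Indicator

variable {m : ℕ} {S : Finset (Fin m)} {c α : ℝ}

lemma mem_kHatSet_ite_iff (hα : 0 < α) (hc : 0 < c) (k : ℕ) :
    k ∈ kHatSet (fun i => if i ∈ S then c else 0) α ↔
      1 ≤ k ∧ k ≤ S.card ∧ (m : ℝ) / (α * k) ≤ c := by
  rw [kHatSet, mem_filter, mem_Icc]
  refine ⟨fun ⟨⟨hk1, hkm⟩, hle⟩ => ?_, fun ⟨hk1, hkS, hle⟩ => ?_⟩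
  · rw [orderStat_ite S hc hk1] at hle
    split_ifs at hle with hkS
    · exact ⟨hk1, hkS, hle⟩
    · have hk : (1 : ℝ) ≤ k := by exact_mod_cast hk1
      have hm : (1 : ℝ) ≤ m := by exact_mod_cast hk1.trans hkm
      exact absurd hle (not_le.mpr (by positivity))
  · have hSm : S.card ≤ m := by simpa using S.card_le_univ
    rw [orderStat_ite S hc hk1, if_pos hkS]
    exact ⟨⟨hk1, hkS.trans hSm⟩, hle⟩

lemma eBHRej_ite (hα : 0 < α) (hS : S.Nonempty) (hc : (m : ℝ) / (α * S.card) ≤ c) :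
    eBHRej (fun i => if i ∈ S then c else 0) α = S := by
  have hm : (0 : ℝ) < m := by
    obtain ⟨i, -⟩ := hS
    exact_mod_cast i.pos
  have hScard : (0 : ℝ) < S.card := by exact_mod_cast hS.card_pos
  have hthr : (0 : ℝ) < (m : ℝ) / (α * S.card) := by positivity
  have hc0 : 0 < c := hthr.trans_le hc
  have hmem : S.card ∈ kHatSet (fun i => if i ∈ S then c else 0) α :=
    (mem_kHatSet_ite_iff hα hc0 _).mpr ⟨hS.card_pos, le_rfl, hc⟩
  have hmax : (kHatSet (fun i => if i ∈ S then c else 0) α).max' ⟨_, hmem⟩ = S.card :=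
    le_antisymm (max'_le _ _ _ fun k hk => ((mem_kHatSet_ite_iff hα hc0 k).mp hk).2.1)
      (le_max' _ _ hmem)
  rw [eBHRej, dif_pos ⟨_, hmem⟩, hmax]
  ext i
  by_cases hi : i ∈ S <;> simp [hi, hc, hthr]

end Indicator

section Conformal

variable {m : ℕ} (u ut : Fin m → ℝ)

noncomputable def selAt (t : ℝ) : Finset (Fin m) :=
  univ.filter fun i => u i ≤ min (ut i) t

noncomputable def mirrorCount (t : ℝ) : ℝ :=
  ∑ i, (1 - xiv u ut i) * (if sv u ut i ≤ t then 1 else 0)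

lemma xiv_mul_ite_sv_le (t : ℝ) (i : Fin m) :
    xiv u ut i * (if sv u ut i ≤ t then 1 else 0) = if u i ≤ min (ut i) t then 1 else 0 := by
  rw [xiv, sv]
  by_cases h : u i ≤ ut i
  · simp [h]
  · have : ¬ u i ≤ min (ut i) t := fun h' => h (h'.trans (min_le_left _ _))
    simp [h, this]

lemma card_selAt_eq_sum (t : ℝ) :
    ((selAt u ut t).card : ℝ) = ∑ i, xiv u ut i * (if sv u ut i ≤ t then 1 else 0) := by
  simp_rw [xiv_mul_ite_sv_le, sum_boole, selAt]

lemma mirrorCount_nonneg (t : ℝ) : 0 ≤ mirrorCount u ut t :=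
  sum_nonneg fun i _ => by unfold xiv; split_ifs <;> norm_num

lemma Qfun_eq (t : ℝ) :
    Qfun u ut t = (1 + mirrorCount u ut t) / max ((selAt u ut t).card : ℝ) 1 := by
  rw [Qfun, card_selAt_eq_sum, mirrorCount]

variable {u ut} {α t : ℝ}

lemma selAt_nonempty_of_Qfun_le (hα : α < 1) (hQ : Qfun u ut t ≤ α) :
    (selAt u ut t).Nonempty := by
  by_contra hS
  rw [Qfun_eq, not_nonempty_iff_eq_empty.mp hS] at hQ
  norm_num at hQ
  linarith [mirrorCount_nonneg u ut t]

lemma one_add_mirrorCount_le_of_Qfun_le (hα : α < 1) (hQ : Qfun u ut t ≤ α) :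
    1 + mirrorCount u ut t ≤ α * (selAt u ut t).card := by
  have hS : (1 : ℝ) ≤ (selAt u ut t).card := by
    exact_mod_cast (selAt_nonempty_of_Qfun_le hα hQ).card_pos
  rwa [Qfun_eq, max_eq_left hS, div_le_iff₀ (by linarith)] at hQ

lemma evar_eq_ite (h : (thrCand u ut α).Nonempty) :
    evar u ut α = fun i => if i ∈ selAt u ut ((thrCand u ut α).max' h)
      then (m : ℝ) / (1 + mirrorCount u ut ((thrCand u ut α).max' h)) else 0 := by
  ext i
  rw [evar, dif_pos h, mul_assoc, xiv_mul_ite_sv_le, ← mirrorCount]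
  simp only [selAt, mem_filter, mem_univ, true_and]
  split_ifs <;> simp

end Conformal

theorem stmt1_general {m : ℕ} (α : ℝ) (hα : α ∈ Set.Ioo (0 : ℝ) 1)
    (u ut : Fin m → ℝ) :
    eBHRej (evar u ut α) α = selSet u ut α := by
  obtain ⟨hα0, hα1⟩ := hα
  by_cases h : (thrCand u ut α).Nonempty
  · set τ := (thrCand u ut α).max' h
    have hQ : Qfun u ut τ ≤ α := (mem_filter.mp ((thrCand u ut α).max'_mem h)).2
    have hV : 0 < 1 + mirrorCount u ut τ := by linarith [mirrorCount_nonneg u ut τ]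
    rw [evar_eq_ite h, selSet, dif_pos h]
    exact eBHRej_ite hα0 (selAt_nonempty_of_Qfun_le hα1 hQ)
      (div_le_div_of_nonneg_left m.cast_nonneg hV (one_add_mirrorCount_le_of_Qfun_le hα1 hQ))
  · rw [selSet, dif_neg h]
    exact eBHRej_eq_empty_of_forall_eq_zero hα0 fun i => dif_neg h

/-- the eBH rejection set applied to the conformal e-variables coincides
with the COIN selection set. -/
theorem stmt1 {m : ℕ} (hm : 1 ≤ m) (α : ℝ) (hα : α ∈ Set.Ioo (0 : ℝ) 1)
    (u ut : Fin m → ℝ) (hne : ∀ i, u i ≠ ut i) :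
    eBHRej (evar u ut α) α = selSet u ut α :=
  stmt1_general α hα u ut
end

section
/- Let m ≥ 1, α ∈ (0,1), H₀ ⊆ {1,…,m}, and let E_1,…,E_m be nonnegative random variables satisfying the generalized/compound e-variable condition E[Σ_{i∈H₀} E_i] ≤ m. Then the eBH procedure at level α applied to (E_1,…,E_m) controls the false discovery rate: E[ |R_eBH ∩ H₀| / max(|R_eBH|, 1) ] ≤ α. -/
open MeasureTheory Finset
open scoped ENNReal

lemma card_orderStat_le {m : ℕ} (E : Fin m → ℝ) {k : ℕ} (hk1 : 1 ≤ k) (hkm : k ≤ m) :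
    k ≤ (Finset.univ.filter (fun i => orderStat E k ≤ E i)).card := by
  unfold orderStat
  set le : ℝ → ℝ → Bool := fun a b => decide (b ≤ a) with hle
  set L : List ℝ := (List.ofFn E).mergeSort le with hL
  have hlen : L.length = m := by
    rw [hL, List.length_mergeSort, List.length_ofFn]
  have hklen : k - 1 < L.length := by omega
  set v : ℝ := L.getD (k - 1) 0 with hv
  have hvget : v = L[k - 1] := List.getD_eq_getElem L 0 hklen
  have hsorted : L.Pairwise (fun a b => le a b) := by
    apply List.pairwise_mergeSort
    · intro a b c hab hbc
      simp only [hle, decide_eq_true_eq] at *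
      linarith
    · intro a b
      simp only [hle]
      rcases le_total a b with h | h
      · simp [h]
      · simp [h]
  -- first k elements of L are ≥ v
  have hfirst : ∀ j (hj : j < k), v ≤ L[j]'(by omega) := by
    intro j hj
    rcases eq_or_lt_of_le (Nat.le_of_lt_succ (by omega : j < (k-1)+1)) with h | h
    · rw [hvget]; subst h; exact le_refl _
    · rw [hvget]
      have := List.pairwise_iff_getElem.mp hsorted j (k-1) (by omega) hklen h
      simpa [hle] using this
  -- countP bound
  have hcount : k ≤ L.countP (fun x => decide (v ≤ x)) := by
    have hsplit : L = L.take k ++ L.drop k := (List.take_append_drop k L).symm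
    have htk : (L.take k).length = k := by rw [List.length_take]; omega
    have hall : (L.take k).countP (fun x => decide (v ≤ x)) = k := by
      rw [List.countP_eq_length.mpr, htk]
      intro a ha
      obtain ⟨j, hj, rfl⟩ := List.mem_iff_getElem.mp ha
      rw [List.getElem_take]
      simpa using hfirst j (by omega)
    calc k = (L.take k).countP (fun x => decide (v ≤ x)) := hall.symm
      _ ≤ _ := by
        conv_rhs => rw [hsplit]
        rw [List.countP_append]; omega
  -- transfer to Finset card
  have hperm : L.countP (fun x => decide (v ≤ x)) = (List.ofFn E).countP (fun x => decide (v ≤ x)) :=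
    (List.mergeSort_perm _ _).countP_eq _
  have hbridge : (Finset.univ.filter (fun i => v ≤ E i)).card
      = (List.ofFn E).countP (fun x => decide (v ≤ x)) := by
    rw [List.ofFn_eq_map, List.countP_map, List.countP_eq_length_filter, Fin.univ_def]
    simp only [Finset.card, Finset.filter, Multiset.filter_coe, Multiset.coe_card]
    rfl
  omega

lemma fdp_le {m : ℕ} (hm : 1 ≤ m) {α : ℝ} (hα : 0 < α) (H0 : Finset (Fin m))
    (E : Fin m → ℝ) (hnn : ∀ i, 0 ≤ E i) :
    ((eBHRej E α ∩ H0).card : ℝ) / max ((eBHRej E α).card : ℝ) 1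
      ≤ α / m * ∑ i ∈ H0, E i := by
  have hm0 : (0:ℝ) < m := by exact_mod_cast hm
  have hsum : 0 ≤ ∑ i ∈ H0, E i := Finset.sum_nonneg fun i _ => hnn i
  rw [eBHRej]
  split_ifs with h
  · set k := (kHatSet E α).max' h with hkdef
    have hkmem : k ∈ kHatSet E α := (kHatSet E α).max'_mem h
    rw [kHatSet, Finset.mem_filter, Finset.mem_Icc] at hkmem
    obtain ⟨⟨hk1, hkm⟩, hkstat⟩ := hkmem
    set R : Finset (Fin m) :=
      Finset.univ.filter (fun i => (m : ℝ) / (α * k) ≤ E i) with hR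
    have hkR : k ≤ R.card := by
      refine le_trans (card_orderStat_le E hk1 hkm) (Finset.card_le_card ?_)
      intro i hi
      rw [Finset.mem_filter] at hi ⊢
      exact ⟨hi.1, le_trans hkstat hi.2⟩
    have hR1 : 1 ≤ R.card := le_trans hk1 hkR
    have hRpos : (0:ℝ) < R.card := by exact_mod_cast hR1
    have hmax : max ((R.card : ℝ)) 1 = R.card := max_eq_left (by exact_mod_cast hR1)
    rw [hmax, div_le_iff₀ hRpos]
    -- card (R ∩ H0) ≤ α * R.card / m * Σ
    have key : ((R ∩ H0).card : ℝ) ≤ α * R.card / m * ∑ i ∈ H0, E i := by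
      have h1 : ∀ i ∈ R ∩ H0, (1:ℝ) ≤ α * R.card / m * E i := by
        intro i hi
        have hiR : i ∈ R := (Finset.mem_inter.mp hi).1
        rw [hR, Finset.mem_filter] at hiR
        have hEi : (m : ℝ) / (α * k) ≤ E i := hiR.2
        have hk0 : (0:ℝ) < k := by positivity
        have hαk : (0:ℝ) < α * k := by positivity
        have h2 : (m : ℝ) / (α * R.card) ≤ E i := by
          refine le_trans (div_le_div_of_nonneg_left hm0.le hαk ?_) hEi
          have : (k:ℝ) ≤ R.card := by exact_mod_cast hkR
          nlinarith
        have hαR : (0:ℝ) < α * R.card := by positivity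
        rw [div_le_iff₀ hαR] at h2
        rw [div_mul_eq_mul_div, le_div_iff₀ hm0]
        nlinarith
      calc ((R ∩ H0).card : ℝ) = ∑ i ∈ R ∩ H0, (1:ℝ) := by simp
        _ ≤ ∑ i ∈ R ∩ H0, α * R.card / m * E i := Finset.sum_le_sum h1
        _ ≤ ∑ i ∈ H0, α * R.card / m * E i := by
            refine Finset.sum_le_sum_of_subset_of_nonneg (Finset.inter_subset_right) ?_
            intro i _ _; have := hnn i; positivity
        _ = α * R.card / m * ∑ i ∈ H0, E i := by rw [Finset.mul_sum]
    calc ((R ∩ H0).card : ℝ) ≤ α * R.card / m * ∑ i ∈ H0, E i := key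
      _ = α / m * (∑ i ∈ H0, E i) * R.card := by ring
  · simp only [Finset.empty_inter, Finset.card_empty, Nat.cast_zero, zero_div]
    positivity

/-- FDR control of the eBH procedure applied to generalized/compound
e-variables. -/
theorem stmt2 {m : ℕ} (hm : 1 ≤ m)
    {Ω : Type*} [MeasurableSpace Ω] (P : Measure Ω) [IsProbabilityMeasure P]
    (α : ℝ) (hα : α ∈ Set.Ioo (0 : ℝ) 1) (H0 : Finset (Fin m))
    (E : Fin m → Ω → ℝ) (hmeas : ∀ i, Measurable (E i)) (hnonneg : ∀ i ω, 0 ≤ E i ω)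
    (hcompound : ∫⁻ ω, ∑ i ∈ H0, ENNReal.ofReal (E i ω) ∂P ≤ (m : ℝ≥0∞)) :
    ∫⁻ ω, ENNReal.ofReal
        (((eBHRej (fun i => E i ω) α ∩ H0).card : ℝ) /
          max ((eBHRej (fun i => E i ω) α).card : ℝ) 1) ∂P
      ≤ ENNReal.ofReal α := by
  obtain ⟨hα0, hα1⟩ := hα
  have hm0 : (0:ℝ) < m := by exact_mod_cast hm
  have hαm : 0 ≤ α / m := by positivity
  have step1 : ∫⁻ ω, ENNReal.ofReal
        (((eBHRej (fun i => E i ω) α ∩ H0).card : ℝ) /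
          max ((eBHRej (fun i => E i ω) α).card : ℝ) 1) ∂P
      ≤ ∫⁻ ω, ENNReal.ofReal (α / m) * ∑ i ∈ H0, ENNReal.ofReal (E i ω) ∂P := by
    refine lintegral_mono fun ω => ?_
    have := fdp_le hm hα0 H0 (fun i => E i ω) (fun i => hnonneg i ω)
    refine le_trans (ENNReal.ofReal_le_ofReal this) ?_
    rw [ENNReal.ofReal_mul hαm, ENNReal.ofReal_sum_of_nonneg (fun i _ => hnonneg i ω)]
  refine le_trans step1 ?_
  rw [lintegral_const_mul' _ _ ENNReal.ofReal_ne_top]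
  calc ENNReal.ofReal (α / m) * ∫⁻ ω, ∑ i ∈ H0, ENNReal.ofReal (E i ω) ∂P
      ≤ ENNReal.ofReal (α / m) * (m : ℝ≥0∞) := by
        exact mul_le_mul_right hcompound _
    _ = ENNReal.ofReal α := by
        rw [← ENNReal.ofReal_natCast m, ← ENNReal.ofReal_mul hαm,
          div_mul_cancel₀ _ (ne_of_gt hm0)]
end

section
/- Let ν > 0, let G be a probability measure on (0,∞), let x ∈ ℝ and t > 0. Then the conditional null density satisfies the closed-form identity h_G(x, t) = (1/√(2π)) · (Γ((ν+1)/2)/Γ(ν/2)) · (ν/2)^{ν/2} · ((ν+1)/2)^{−(ν+1)/2} · t^{ν/2−1} · ((x² + ν t)/(ν+1))^{−(ν−1)/2} · f_G((x² + ν t)/(ν+1); ν+1) / f_G(t; ν). -/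
open MeasureTheory Real
open scoped ENNReal

/-- `g_ν(t; σ²)`: the density of `(σ²/ν)·χ²_ν`, i.e. the Gamma(ν/2, rate ν/(2σ²)) density. -/
noncomputable def gdens (ν σ2 t : ℝ) : ℝ :=
  (1 / Real.Gamma (ν / 2)) * (ν / (2 * σ2)) ^ (ν / 2) * t ^ (ν / 2 - 1) *
    Real.exp (-(ν * t) / (2 * σ2))

/-- `φ(x; σ²) = (2πσ²)^{−1/2}·exp(−x²/(2σ²))`: the `N(0, σ²)` density. -/
noncomputable def phidens (x σ2 : ℝ) : ℝ :=
  (2 * Real.pi * σ2) ^ (-(1 / 2) : ℝ) * Real.exp (-(x ^ 2) / (2 * σ2))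

/-- `f_G(t; ν) = ∫ g_ν(t; σ²) dG(σ²)`: the marginal density of `S²`. -/
noncomputable def fGdens (G : Measure ℝ) (ν t : ℝ) : ℝ :=
  ∫ σ2, gdens ν σ2 t ∂G

/-- `h_G(x, t)`: the conditional null density of `X` given `μ = 0, S² = t`. -/
noncomputable def hGdens (G : Measure ℝ) (ν x t : ℝ) : ℝ :=
  (∫ σ2, phidens x σ2 * gdens ν σ2 t ∂G) / fGdens G ν t

/-!
As functions of `σ²`, both `φ(x; σ²)` and `g_ν(t; σ²)` are a power of `σ²` times
`exp(-c/σ²)`. Their product is therefore of the same shape with exponent `-(ν+1)/2` and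
`c = (x² + ν t)/2`, which is, up to a factor free of `σ²`, the `g_{ν+1}` density at
`u = (x² + ν t)/(ν+1)`. Integrating this pointwise identity against `G` gives the theorem.
-/

lemma phidens_eq_rpow_mul_exp {σ2 : ℝ} (x : ℝ) (hσ : 0 < σ2) :
    phidens x σ2 =
      1 / √(2 * π) * (σ2 ^ (-(1 / 2) : ℝ) * exp (-(x ^ 2) / (2 * σ2))) := by
  rw [phidens, mul_rpow (by positivity) hσ.le, rpow_neg (by positivity), sqrt_eq_rpow]
  ring

lemma gdens_eq_rpow_mul_exp {ν σ2 : ℝ} (t : ℝ) (hν : 0 ≤ ν) (hσ : 0 < σ2) :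
    gdens ν σ2 t =
      (ν / 2) ^ (ν / 2) / Gamma (ν / 2) * t ^ (ν / 2 - 1) *
        (σ2 ^ (-(ν / 2)) * exp (-(ν * t) / (2 * σ2))) := by
  rw [gdens, show ν / (2 * σ2) = ν / 2 / σ2 by ring, div_rpow (by positivity) hσ.le,
    rpow_neg hσ.le]
  ring

lemma phidens_mul_gdens {ν σ2 : ℝ} (x t : ℝ) (hν : 0 < ν) (ht : 0 < t) (hσ : 0 < σ2) :
    phidens x σ2 * gdens ν σ2 t =
      ((1 / √(2 * π)) * (Gamma ((ν + 1) / 2) / Gamma (ν / 2)) *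
        (ν / 2) ^ (ν / 2) * ((ν + 1) / 2) ^ (-((ν + 1) / 2)) *
        t ^ (ν / 2 - 1) * ((x ^ 2 + ν * t) / (ν + 1)) ^ (-((ν - 1) / 2))) *
      gdens (ν + 1) σ2 ((x ^ 2 + ν * t) / (ν + 1)) := by
  set u := (x ^ 2 + ν * t) / (ν + 1) with hu_def
  have hu : 0 < u := by positivity
  have hσ_pow : σ2 ^ (-(1 / 2) : ℝ) * σ2 ^ (-(ν / 2)) = σ2 ^ (-((ν + 1) / 2)) := by
    rw [← rpow_add hσ]; ring_nf
  have hexp : exp (-(x ^ 2) / (2 * σ2)) * exp (-(ν * t) / (2 * σ2)) =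
      exp (-((ν + 1) * u) / (2 * σ2)) := by
    rw [← exp_add, hu_def]; congr 1; field_simp; ring
  rw [phidens_eq_rpow_mul_exp x hσ, gdens_eq_rpow_mul_exp t hν.le hσ,
    gdens_eq_rpow_mul_exp u (by positivity) hσ, ← hσ_pow, ← hexp,
    show (ν + 1) / 2 - 1 = (ν - 1) / 2 by ring, rpow_neg hu.le,
    rpow_neg (by positivity : (0 : ℝ) ≤ (ν + 1) / 2)]
  field_simp

theorem stmt4_general (ν : ℝ) (hν : 0 < ν) (G : Measure ℝ)
    (hGsupp : ∀ᵐ σ2 ∂G, 0 < σ2) (x t : ℝ) (ht : 0 < t) :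
    hGdens G ν x t =
      (1 / Real.sqrt (2 * Real.pi)) * (Real.Gamma ((ν + 1) / 2) / Real.Gamma (ν / 2)) *
        (ν / 2) ^ (ν / 2) * ((ν + 1) / 2) ^ (-((ν + 1) / 2)) *
        t ^ (ν / 2 - 1) * ((x ^ 2 + ν * t) / (ν + 1)) ^ (-((ν - 1) / 2)) *
        (fGdens G (ν + 1) ((x ^ 2 + ν * t) / (ν + 1)) / fGdens G ν t) := by
  rw [hGdens, ← mul_div_assoc]
  congr 1
  rw [fGdens, ← integral_const_mul]
  exact integral_congr_ae (hGsupp.mono fun σ2 hσ => phidens_mul_gdens x t hν ht hσ)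

/-- closed-form expression for the conditional null density `h_G`. -/
theorem stmt4 (ν : ℝ) (hν : 0 < ν) (G : Measure ℝ) [IsProbabilityMeasure G]
    (hGsupp : ∀ᵐ σ2 ∂G, 0 < σ2) (x t : ℝ) (ht : 0 < t) :
    hGdens G ν x t =
      (1 / Real.sqrt (2 * Real.pi)) * (Real.Gamma ((ν + 1) / 2) / Real.Gamma (ν / 2)) *
        (ν / 2) ^ (ν / 2) * ((ν + 1) / 2) ^ (-((ν + 1) / 2)) *
        t ^ (ν / 2 - 1) * ((x ^ 2 + ν * t) / (ν + 1)) ^ (-((ν - 1) / 2)) *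
        (fGdens G (ν + 1) ((x ^ 2 + ν * t) / (ν + 1)) / fGdens G ν t) :=
  stmt4_general ν hν G hGsupp x t ht
end

section
/- Let (X, ν) and (S, μ) be σ-finite measure spaces. Let h₁, h₂ : X × S → [0, ∞) be measurable functions such that ∫ h₁(x, s) dν(x) ≤ 1 and ∫ h₂(x, s) dν(x) ≤ 1 for every s ∈ S, and let f₁, f₂ : S → [0, ∞) be measurable. Then for every measurable set B ⊆ X × S: ∫∫_B |h₁(x, s) − h₂(x, s)| · f₁(s) dν(x) dμ(s) ≤ 2 ∫∫_B |h₁(x, s) f₁(s) − h₂(x, s) f₂(s)| dν(x) dμ(s) + 2 ∫_S |f₁(s) − f₂(s)| dμ(s), where the inequality is understood in [0, ∞]. -/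
open MeasureTheory
open scoped ENNReal

/-!
Pointwise, `|h₁ - h₂| f₁ ≤ |h₁ f₁ - h₂ f₂| + h₂ |f₁ - f₂|`, from
`(h₁ - h₂) f₁ = (h₁ f₁ - h₂ f₂) + h₂ (f₂ - f₁)`. Integrated over `B`, the second term is at most
`∫ (∫ h₂(x, s) dν(x)) |f₁(s) - f₂(s)| dμ(s) ≤ ∫ |f₁ - f₂| dμ` by Tonelli and the mass bound on `h₂`.
So the inequality even holds with both factors `2` replaced by `1`.
-/

theorem abs_sub_mul_le_abs_mul_sub_mul_add {a b c d : ℝ} (hc : 0 ≤ c) :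
    |a - c| * b ≤ |a * b - c * d| + c * |b - d| :=
  calc |a - c| * b ≤ |(a - c) * b| := by
        rw [abs_mul]; exact mul_le_mul_of_nonneg_left (le_abs_self b) (abs_nonneg _)
    _ = |(a * b - c * d) + c * (d - b)| := by ring_nf
    _ ≤ |a * b - c * d| + |c * (d - b)| := abs_add_le _ _
    _ = |a * b - c * d| + c * |b - d| := by rw [abs_mul, abs_of_nonneg hc, abs_sub_comm d b]

theorem ENNReal.ofReal_abs_sub_mul_le {a b c d : ℝ} (hc : 0 ≤ c) :
    ENNReal.ofReal (|a - c| * b)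
      ≤ ENNReal.ofReal |a * b - c * d| + ENNReal.ofReal c * ENNReal.ofReal |b - d| := by
  rw [← ENNReal.ofReal_mul hc, ← ENNReal.ofReal_add (abs_nonneg _)
    (mul_nonneg hc (abs_nonneg _))]
  exact ENNReal.ofReal_le_ofReal (abs_sub_mul_le_abs_mul_sub_mul_add hc)

theorem lintegral_prod_mul_snd_le {X S : Type*} [MeasurableSpace X] [MeasurableSpace S]
    {ν : Measure X} {μ : Measure S} [SFinite ν] [SFinite μ]
    {k : X × S → ℝ≥0∞} (hk : Measurable k) (hk_mass : ∀ s, ∫⁻ x, k (x, s) ∂ν ≤ 1)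
    (φ : S → ℝ≥0∞) :
    ∫⁻ p, k p * φ p.2 ∂ν.prod μ ≤ ∫⁻ s, φ s ∂μ :=
  calc ∫⁻ p, k p * φ p.2 ∂ν.prod μ
      = ∫⁻ p, k p.swap * φ p.1 ∂μ.prod ν := (lintegral_prod_swap _).symm
    _ ≤ ∫⁻ s, ∫⁻ x, k (x, s) * φ s ∂ν ∂μ := lintegral_prod_le _
    _ = ∫⁻ s, (∫⁻ x, k (x, s) ∂ν) * φ s ∂μ := by
        congr! 2 with s
        exact lintegral_mul_const _ (hk.comp measurable_prodMk_right)
    _ ≤ ∫⁻ s, φ s ∂μ := lintegral_mono fun s ↦ mul_le_of_le_one_left' (hk_mass s)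

theorem stmt8_general {X S : Type*} [MeasurableSpace X] [MeasurableSpace S]
    (ν : Measure X) (μ : Measure S) [SigmaFinite ν] [SigmaFinite μ]
    (h₁ h₂ : X → S → ℝ) (f₁ f₂ : S → ℝ)
    (hm2 : Measurable (Function.uncurry h₂))
    (h2nn : ∀ x s, 0 ≤ h₂ x s)
    (hint2 : ∀ s, ∫⁻ x, ENNReal.ofReal (h₂ x s) ∂ν ≤ 1)
    (hf1 : Measurable f₁) (hf2 : Measurable f₂)
    (B : Set (X × S)) :
    ∫⁻ p in B, ENNReal.ofReal (|h₁ p.1 p.2 - h₂ p.1 p.2| * f₁ p.2) ∂(ν.prod μ)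
      ≤ 2 * ∫⁻ p in B, ENNReal.ofReal |h₁ p.1 p.2 * f₁ p.2 - h₂ p.1 p.2 * f₂ p.2| ∂(ν.prod μ)
        + 2 * ∫⁻ s, ENNReal.ofReal |f₁ s - f₂ s| ∂μ := by
  set A := ∫⁻ p in B, ENNReal.ofReal |h₁ p.1 p.2 * f₁ p.2 - h₂ p.1 p.2 * f₂ p.2| ∂(ν.prod μ)
  set C := ∫⁻ s, ENNReal.ofReal |f₁ s - f₂ s| ∂μ
  have hk : Measurable fun p : X × S ↦ ENNReal.ofReal (h₂ p.1 p.2) := hm2.ennreal_ofReal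
  have hφ : Measurable fun s ↦ ENNReal.ofReal |f₁ s - f₂ s| := (hf1.sub hf2).abs.ennreal_ofReal
  calc ∫⁻ p in B, ENNReal.ofReal (|h₁ p.1 p.2 - h₂ p.1 p.2| * f₁ p.2) ∂(ν.prod μ)
      ≤ ∫⁻ p in B, ENNReal.ofReal |h₁ p.1 p.2 * f₁ p.2 - h₂ p.1 p.2 * f₂ p.2|
          + ENNReal.ofReal (h₂ p.1 p.2) * ENNReal.ofReal |f₁ p.2 - f₂ p.2| ∂(ν.prod μ) :=
        lintegral_mono fun p ↦ ENNReal.ofReal_abs_sub_mul_le (h2nn _ _)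
    _ = A + ∫⁻ p in B, ENNReal.ofReal (h₂ p.1 p.2) * ENNReal.ofReal |f₁ p.2 - f₂ p.2|
          ∂(ν.prod μ) :=
        lintegral_add_right' _ (hk.mul (hφ.comp measurable_snd)).aemeasurable
    _ ≤ A + C := by
        gcongr
        exact (setLIntegral_le_lintegral _ _).trans (lintegral_prod_mul_snd_le hk hint2 _)
    _ ≤ 2 * A + 2 * C := by
        gcongr <;> rw [two_mul] <;> exact le_add_self

/-- abstract comparison lemma. If `h₁(·, s)` and `h₂(·, s)` are sub-probability
densities in `x` for every `s`, then for any measurable `B ⊆ X × S`,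
`∫∫_B |h₁ − h₂|·f₁ ≤ 2·∫∫_B |h₁f₁ − h₂f₂| + 2·∫ |f₁ − f₂|`, in `[0, ∞]`. -/
theorem stmt8 {X S : Type*} [MeasurableSpace X] [MeasurableSpace S]
    (ν : Measure X) (μ : Measure S) [SigmaFinite ν] [SigmaFinite μ]
    (h₁ h₂ : X → S → ℝ) (f₁ f₂ : S → ℝ)
    (hm1 : Measurable (Function.uncurry h₁)) (hm2 : Measurable (Function.uncurry h₂))
    (h1nn : ∀ x s, 0 ≤ h₁ x s) (h2nn : ∀ x s, 0 ≤ h₂ x s)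
    (hint1 : ∀ s, ∫⁻ x, ENNReal.ofReal (h₁ x s) ∂ν ≤ 1)
    (hint2 : ∀ s, ∫⁻ x, ENNReal.ofReal (h₂ x s) ∂ν ≤ 1)
    (hf1 : Measurable f₁) (hf2 : Measurable f₂)
    (hf1nn : ∀ s, 0 ≤ f₁ s) (hf2nn : ∀ s, 0 ≤ f₂ s)
    (B : Set (X × S)) (hB : MeasurableSet B) :
    ∫⁻ p in B, ENNReal.ofReal (|h₁ p.1 p.2 - h₂ p.1 p.2| * f₁ p.2) ∂(ν.prod μ)
      ≤ 2 * ∫⁻ p in B, ENNReal.ofReal |h₁ p.1 p.2 * f₁ p.2 - h₂ p.1 p.2 * f₂ p.2| ∂(ν.prod μ)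
        + 2 * ∫⁻ s, ENNReal.ofReal |f₁ s - f₂ s| ∂μ :=
  stmt8_general ν μ h₁ h₂ f₁ f₂ hm2 h2nn hint2 hf1 hf2 B
end

section
/- Let f be a probability density on (0,∞), and for each s > 0 let h₁(·|s) and h₂(·|s) be probability densities on ℝ, jointly measurable in (x, s). Let (X, Y, S) be an ℝ × ℝ × (0,∞)-valued random vector whose law has density (x, y, s) ↦ h₂(x|s)·h₁(y|s)·f(s) with respect to Lebesgue measure. Let û : ℝ × (0,∞) → ℝ be measurable, set U = û(X, S) and Ũ = û(Y, S), and assume P(U = Ũ) = 0. Then for every Borel set E ⊆ ℝ: | P(U > Ũ, min(U, Ũ) ∈ E) − (1/2)·P(min(U, Ũ) ∈ E) | ≤ 2 ∫_0^∞ ∫_ℝ |h₁(x|s) − h₂(x|s)| dx · f(s) ds. -/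
/-!
If `h₂ = h₁`, the law of `(X, Y, S)` is invariant under exchanging `X` and `Y`, so `U > Ũ` and
`U < Ũ` are equally likely on `{min(U, Ũ) ∈ E}`. In general, with `g` the joint density and `σ`
the exchange, `P(U > Ũ, min ∈ E) = ∫_A g` and `P(U < Ũ, min ∈ E) = ∫_A g ∘ σ` for one set `A`;
as ties are null, the left-hand side is `|∫_A (g - g ∘ σ)| / 2`. Finally
`h₂(x) h₁(y) - h₂(y) h₁(x) = (h₂(x) - h₁(x)) h₁(y) + h₁(x) (h₁(y) - h₂(y))`, and integrating out
the density `h₁` bounds `∫ |g - g ∘ σ|` by the right-hand side.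
-/
open MeasureTheory
open scoped ENNReal

lemma abs_mul_sub_mul_le_of_nonneg {u v u' v' : ℝ} (hv : 0 ≤ v) (hv' : 0 ≤ v') :
    |u * v' - u' * v| ≤ |v - u| * v' + |v' - u'| * v := by
  calc |u * v' - u' * v| = |(u - v) * v' + (v' - u') * v| := by ring_nf
    _ ≤ |u - v| * v' + |v' - u'| * v := by
      refine (abs_add_le _ _).trans_eq ?_
      rw [abs_mul, abs_mul, abs_of_nonneg hv, abs_of_nonneg hv']
    _ = |v - u| * v' + |v' - u'| * v := by rw [abs_sub_comm u]

lemma ofReal_abs_toReal_sub_half_toReal_add_le {a b r : ℝ≥0∞} (ha : a ≠ ⊤) (hb : b ≠ ⊤)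
    (hab : a ≤ b + r) (hba : b ≤ a + r) :
    ENNReal.ofReal |a.toReal - 1 / 2 * (a + b).toReal| ≤ r := by
  rcases eq_or_ne r ⊤ with rfl | hr
  · exact le_top
  have hab' : a.toReal ≤ b.toReal + r.toReal := by
    rw [← ENNReal.toReal_add hb hr]; exact ENNReal.toReal_mono (by finiteness) hab
  have hba' : b.toReal ≤ a.toReal + r.toReal := by
    rw [← ENNReal.toReal_add ha hr]; exact ENNReal.toReal_mono (by finiteness) hba
  refine ENNReal.ofReal_le_of_le_toReal ?_
  rw [ENNReal.toReal_add ha hb, abs_le]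
  constructor <;> linarith [ENNReal.toReal_nonneg (a := r)]

section TieSplitting

variable {α : Type*} [MeasurableSpace α] {μ : Measure α}

lemma measure_min_mem_eq_add {u v : α → ℝ} (hu : Measurable u) (hv : Measurable v)
    {E : Set ℝ} (hE : MeasurableSet E) (htie : μ {x | u x = v x} = 0) :
    μ {x | min (u x) (v x) ∈ E} =
      μ {x | v x < u x ∧ min (u x) (v x) ∈ E} + μ {x | u x < v x ∧ min (u x) (v x) ∈ E} := by
  have hdisj : Disjoint {x | v x < u x ∧ min (u x) (v x) ∈ E}
      {x | u x < v x ∧ min (u x) (v x) ∈ E} :=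
    Set.disjoint_left.mpr fun x h h' => (h.1.trans h'.1).false
  rw [← measure_union hdisj ((measurableSet_lt hu hv).inter ((hu.min hv) hE))]
  refine measure_congr (Filter.eventuallyEq_set.mpr ?_)
  have hne : ∀ᵐ x ∂μ, u x ≠ v x := measure_eq_zero_iff_ae_notMem.mp htie
  filter_upwards [hne] with x hx
  rcases hx.lt_or_gt with h | h <;> simp [h, h.not_gt]

end TieSplitting

section Densities

variable {α : Type*} [MeasurableSpace α]

lemma withDensity_ofReal_apply_le_add (μ : Measure α) {φ ψ : α → ℝ} (hψ : Measurable ψ)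
    {s : Set α} (hs : MeasurableSet s) :
    μ.withDensity (fun x => ENNReal.ofReal (φ x)) s ≤
      μ.withDensity (fun x => ENNReal.ofReal (ψ x)) s + ∫⁻ x, ENNReal.ofReal |φ x - ψ x| ∂μ := by
  have hpt : ∀ x, ENNReal.ofReal (φ x) ≤ ENNReal.ofReal (ψ x) + ENNReal.ofReal |φ x - ψ x| :=
    fun x => (ENNReal.ofReal_le_ofReal (by linarith [le_abs_self (φ x - ψ x)])).trans
      ENNReal.ofReal_add_le
  rw [withDensity_apply _ hs, withDensity_apply _ hs]
  calc ∫⁻ x in s, ENNReal.ofReal (φ x) ∂μ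
      ≤ ∫⁻ x in s, ENNReal.ofReal (ψ x) + ENNReal.ofReal |φ x - ψ x| ∂μ := lintegral_mono hpt
    _ = ∫⁻ x in s, ENNReal.ofReal (ψ x) ∂μ + ∫⁻ x in s, ENNReal.ofReal |φ x - ψ x| ∂μ :=
      lintegral_add_left hψ.ennreal_ofReal _
    _ ≤ _ := by gcongr; exact Measure.restrict_le_self

lemma ofReal_abs_withDensity_sub_half_add_le (μ : Measure α) {φ ψ : α → ℝ} (hφ : Measurable φ)
    (hψ : Measurable ψ) {s : Set α} (hs : MeasurableSet s)
    (hφs : μ.withDensity (fun x => ENNReal.ofReal (φ x)) s ≠ ⊤)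
    (hψs : μ.withDensity (fun x => ENNReal.ofReal (ψ x)) s ≠ ⊤) :
    ENNReal.ofReal |(μ.withDensity (fun x => ENNReal.ofReal (φ x)) s).toReal -
        1 / 2 * (μ.withDensity (fun x => ENNReal.ofReal (φ x)) s +
          μ.withDensity (fun x => ENNReal.ofReal (ψ x)) s).toReal| ≤
      ∫⁻ x, ENNReal.ofReal |φ x - ψ x| ∂μ := by
  refine ofReal_abs_toReal_sub_half_toReal_add_le hφs hψs
    (withDensity_ofReal_apply_le_add μ hψ hs) ?_
  simp_rw [abs_sub_comm (φ _)]
  exact withDensity_ofReal_apply_le_add μ hφ hs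

lemma MeasureTheory.MeasurePreserving.withDensity_comp_apply_preimage {β : Type*}
    [MeasurableSpace β] {μ : Measure α} {ν : Measure β} {e : α → β}
    (he : MeasurePreserving e μ ν) {g : β → ℝ≥0∞} (hg : Measurable g) {s : Set β}
    (hs : MeasurableSet s) :
    μ.withDensity (g ∘ e) (e ⁻¹' s) = ν.withDensity g s := by
  rw [withDensity_apply _ (he.measurable hs), withDensity_apply _ hs]
  exact he.setLIntegral_comp_preimage hs hg

end Densities

section Triples

variable {α β γ : Type*} [MeasurableSpace α] [MeasurableSpace β] [MeasurableSpace γ]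

def swap12 (p : α × β × γ) : β × α × γ := (p.2.1, p.1, p.2.2)

lemma measurePreserving_swap12 (μ : Measure α) (ν : Measure β) (ρ : Measure γ)
    [SFinite μ] [SFinite ν] [SFinite ρ] :
    MeasurePreserving swap12 (μ.prod (ν.prod ρ)) (ν.prod (μ.prod ρ)) :=
  (measurePreserving_prodAssoc ν μ ρ).comp
    ((Measure.measurePreserving_swap.prod (MeasurePreserving.id ρ)).comp
      (measurePreserving_prodAssoc μ ν ρ).symm)

lemma lintegral_prod_prod_mul {μ : Measure α} {ν : Measure β} {ρ : Measure γ}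
    [SFinite μ] [SFinite ν] [SFinite ρ] {a : α → γ → ℝ≥0∞} {b : β → γ → ℝ≥0∞} {c : γ → ℝ≥0∞}
    (ha : Measurable (Function.uncurry a)) (hb : Measurable (Function.uncurry b))
    (hc : Measurable c) :
    ∫⁻ p, a p.1 p.2.2 * b p.2.1 p.2.2 * c p.2.2 ∂μ.prod (ν.prod ρ) =
      ∫⁻ s, (∫⁻ x, a x s ∂μ) * (∫⁻ y, b y s ∂ν) * c s ∂ρ := by
  have hF : Measurable fun p : α × β × γ => a p.1 p.2.2 * b p.2.1 p.2.2 * c p.2.2 := by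
    fun_prop
  rw [lintegral_prod_symm' _ hF, lintegral_prod_symm' _ (hF.lintegral_prod_left')]
  refine lintegral_congr fun s => ?_
  have ha' : Measurable fun x => a x s := ha.of_uncurry_right
  have hb' : Measurable fun y => b y s := hb.of_uncurry_right
  simp_rw [mul_assoc, lintegral_mul_const _ ha', lintegral_const_mul _ (hb'.mul_const _),
    lintegral_mul_const _ hb']

end Triples

lemma volume_preserving_swap12 {α β γ : Type*} [MeasureSpace α] [MeasureSpace β]
    [MeasureSpace γ] [SFinite (volume : Measure α)] [SFinite (volume : Measure β)]
    [SFinite (volume : Measure γ)] :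
    MeasurePreserving (swap12 : α × β × γ → β × α × γ) :=
  measurePreserving_swap12 volume volume volume

def jointDensity (h₁ h₂ : ℝ → ℝ → ℝ) (f : ℝ → ℝ) (p : ℝ × ℝ × ℝ) : ℝ :=
  h₂ p.1 p.2.2 * h₁ p.2.1 p.2.2 * f p.2.2

lemma measurable_jointDensity {h₁ h₂ : ℝ → ℝ → ℝ} {f : ℝ → ℝ}
    (hm1 : Measurable (Function.uncurry h₁)) (hm2 : Measurable (Function.uncurry h₂))
    (hmf : Measurable f) : Measurable (jointDensity h₁ h₂ f) := by
  unfold jointDensity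
  fun_prop

section ErrorBound

variable {h₁ h₂ : ℝ → ℝ → ℝ} {f : ℝ → ℝ}

lemma lintegral_ofReal_abs_sub_mul_eq (hm1 : Measurable (Function.uncurry h₁))
    (hm2 : Measurable (Function.uncurry h₂)) (hmf : Measurable f) (hfnn : ∀ s, 0 ≤ f s)
    (h1dens : ∀ s, 0 < s → ∫⁻ x, ENNReal.ofReal (h₁ x s) = 1)
    (hfsupp : ∀ s ≤ (0 : ℝ), f s = 0) :
    ∫⁻ p : ℝ × ℝ × ℝ, ENNReal.ofReal (|h₁ p.1 p.2.2 - h₂ p.1 p.2.2| * h₁ p.2.1 p.2.2 * f p.2.2) =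
      ∫⁻ s in Set.Ioi 0, (∫⁻ x, ENNReal.ofReal |h₁ x s - h₂ x s|) * ENNReal.ofReal (f s) := by
  simp_rw [ENNReal.ofReal_mul' (hfnn _), ENNReal.ofReal_mul (abs_nonneg _)]
  rw [Measure.volume_eq_prod, Measure.volume_eq_prod,
    lintegral_prod_prod_mul (a := fun x s => ENNReal.ofReal |h₁ x s - h₂ x s|)
      (b := fun y s => ENNReal.ofReal (h₁ y s)) (hm1.sub hm2).abs.ennreal_ofReal
      hm1.ennreal_ofReal hmf.ennreal_ofReal]
  have hsupp : (Function.support fun s => (∫⁻ x, ENNReal.ofReal |h₁ x s - h₂ x s|) *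
      (∫⁻ y, ENNReal.ofReal (h₁ y s)) * ENNReal.ofReal (f s)) ⊆ Set.Ioi 0 := by
    refine Function.support_subset_iff'.mpr fun s hs => ?_
    rw [hfsupp s (not_lt.mp hs), ENNReal.ofReal_zero, mul_zero]
  rw [← setLIntegral_eq_of_support_subset hsupp]
  exact setLIntegral_congr_fun measurableSet_Ioi fun s hs => by rw [h1dens s hs, mul_one]

lemma lintegral_ofReal_abs_jointDensity_sub_swap12_le (hm1 : Measurable (Function.uncurry h₁))
    (hm2 : Measurable (Function.uncurry h₂)) (hmf : Measurable f) (h1nn : ∀ x s, 0 ≤ h₁ x s)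
    (hfnn : ∀ s, 0 ≤ f s) (h1dens : ∀ s, 0 < s → ∫⁻ x, ENNReal.ofReal (h₁ x s) = 1)
    (hfsupp : ∀ s ≤ (0 : ℝ), f s = 0) :
    ∫⁻ p, ENNReal.ofReal |jointDensity h₁ h₂ f p - jointDensity h₁ h₂ f (swap12 p)| ≤
      2 * ∫⁻ s in Set.Ioi 0, (∫⁻ x, ENNReal.ofReal |h₁ x s - h₂ x s|) * ENNReal.ofReal (f s) := by
  set F : ℝ × ℝ × ℝ → ℝ≥0∞ := fun p =>
    ENNReal.ofReal (|h₁ p.1 p.2.2 - h₂ p.1 p.2.2| * h₁ p.2.1 p.2.2 * f p.2.2)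
  have hF : Measurable F := by fun_prop
  have hpt : ∀ p, ENNReal.ofReal |jointDensity h₁ h₂ f p - jointDensity h₁ h₂ f (swap12 p)| ≤
      F p + F (swap12 p) := fun p => by
    refine (ENNReal.ofReal_le_ofReal ?_).trans ENNReal.ofReal_add_le
    simp only [jointDensity, swap12, ← sub_mul, abs_mul, abs_of_nonneg (hfnn _), ← add_mul]
    exact mul_le_mul_of_nonneg_right
      (abs_mul_sub_mul_le_of_nonneg (h1nn _ _) (h1nn _ _)) (hfnn _)
  calc _ ≤ ∫⁻ p, F p + F (swap12 p) := lintegral_mono hpt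
    _ = (∫⁻ p, F p) + ∫⁻ p, F (swap12 p) := lintegral_add_left hF _
    _ = 2 * ∫⁻ s in Set.Ioi 0, (∫⁻ x, ENNReal.ofReal |h₁ x s - h₂ x s|) *
          ENNReal.ofReal (f s) := by
      rw [volume_preserving_swap12.lintegral_comp hF, two_mul,
        lintegral_ofReal_abs_sub_mul_eq hm1 hm2 hmf hfnn h1dens hfsupp]

end ErrorBound

theorem stmt9_general {Ω : Type*} [MeasurableSpace Ω] (P : Measure Ω) [IsProbabilityMeasure P]
    (h₁ h₂ : ℝ → ℝ → ℝ) (f : ℝ → ℝ)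
    (hm1 : Measurable (Function.uncurry h₁)) (hm2 : Measurable (Function.uncurry h₂))
    (hmf : Measurable f)
    (h1nn : ∀ x s, 0 ≤ h₁ x s) (hfnn : ∀ s, 0 ≤ f s)
    (h1dens : ∀ s, 0 < s → ∫⁻ x, ENNReal.ofReal (h₁ x s) = 1)
    (hfsupp : ∀ s ≤ (0 : ℝ), f s = 0)
    (X Y S : Ω → ℝ) (hX : Measurable X) (hY : Measurable Y) (hS : Measurable S)
    (hlaw : Measure.map (fun ω => (X ω, Y ω, S ω)) P =
      (volume : Measure (ℝ × ℝ × ℝ)).withDensity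
        (fun p => ENNReal.ofReal (h₂ p.1 p.2.2 * h₁ p.2.1 p.2.2 * f p.2.2)))
    (uhat : ℝ → ℝ → ℝ) (huhat : Measurable (Function.uncurry uhat))
    (hnotie : P {ω | uhat (X ω) (S ω) = uhat (Y ω) (S ω)} = 0)
    (E : Set ℝ) (hE : MeasurableSet E) :
    ENNReal.ofReal
        |(P {ω | uhat (Y ω) (S ω) < uhat (X ω) (S ω) ∧
              min (uhat (X ω) (S ω)) (uhat (Y ω) (S ω)) ∈ E}).toReal -
          (1 / 2) * (P {ω | min (uhat (X ω) (S ω)) (uhat (Y ω) (S ω)) ∈ E}).toReal|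
      ≤ 2 * ∫⁻ s in Set.Ioi (0 : ℝ),
            (∫⁻ x, ENNReal.ofReal |h₁ x s - h₂ x s|) * ENNReal.ofReal (f s) := by
  set φ := jointDensity h₁ h₂ f
  have hφ : Measurable φ := measurable_jointDensity hm1 hm2 hmf
  have hφσ : Measurable (φ ∘ swap12) := hφ.comp volume_preserving_swap12.measurable
  have hlaw' : ∀ s, MeasurableSet s → P ((fun ω => (X ω, Y ω, S ω)) ⁻¹' s) =
      volume.withDensity (fun p => ENNReal.ofReal (φ p)) s := fun s hs => by
    rw [← Measure.map_apply (by fun_prop) hs, hlaw]; rfl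
  set A : Set (ℝ × ℝ × ℝ) :=
    {p | uhat p.2.1 p.2.2 < uhat p.1 p.2.2 ∧ min (uhat p.1 p.2.2) (uhat p.2.1 p.2.2) ∈ E}
  have hA : MeasurableSet A := by
    have hu : Measurable fun p : ℝ × ℝ × ℝ => uhat p.1 p.2.2 := by fun_prop
    have hv : Measurable fun p : ℝ × ℝ × ℝ => uhat p.2.1 p.2.2 := by fun_prop
    exact (measurableSet_lt hv hu).inter ((hu.min hv) hE)
  have hXwins : P {ω | uhat (Y ω) (S ω) < uhat (X ω) (S ω) ∧
      min (uhat (X ω) (S ω)) (uhat (Y ω) (S ω)) ∈ E} =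
      volume.withDensity (fun p => ENNReal.ofReal (φ p)) A := hlaw' A hA
  have hYwins : P {ω | uhat (X ω) (S ω) < uhat (Y ω) (S ω) ∧
      min (uhat (X ω) (S ω)) (uhat (Y ω) (S ω)) ∈ E} =
      volume.withDensity (fun p => ENNReal.ofReal ((φ ∘ swap12) p)) A := by
    rw [← volume_preserving_swap12.withDensity_comp_apply_preimage hφσ.ennreal_ofReal hA]
    refine Eq.trans ?_ (hlaw' _ (volume_preserving_swap12.measurable hA))
    congr 1
    ext ω
    simp [A, swap12, min_comm]
  rw [measure_min_mem_eq_add (by fun_prop) (by fun_prop) hE hnotie, hYwins, hXwins]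
  exact (ofReal_abs_withDensity_sub_half_add_le _ hφ hφσ hA (hXwins ▸ measure_ne_top P _)
    (hYwins ▸ measure_ne_top P _)).trans
    (lintegral_ofReal_abs_jointDensity_sub_swap12_le hm1 hm2 hmf h1nn hfnn h1dens hfsupp)

/-- if `(X, Y, S)` has density `h₂(x|s)·h₁(y|s)·f(s)` (true calibration
density `h₁`, estimated observation density `h₂`), `U = û(X, S)`, `Ũ = û(Y, S)` and
`P(U = Ũ) = 0`, then for every Borel `E`,
`|P(U > Ũ, min(U,Ũ) ∈ E) − (1/2)·P(min(U,Ũ) ∈ E)| ≤ 2·∫∫ |h₁ − h₂| dx · f(s) ds`. -/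
theorem stmt9 {Ω : Type*} [MeasurableSpace Ω] (P : Measure Ω) [IsProbabilityMeasure P]
    (h₁ h₂ : ℝ → ℝ → ℝ) (f : ℝ → ℝ)
    (hm1 : Measurable (Function.uncurry h₁)) (hm2 : Measurable (Function.uncurry h₂))
    (hmf : Measurable f)
    (h1nn : ∀ x s, 0 ≤ h₁ x s) (h2nn : ∀ x s, 0 ≤ h₂ x s) (hfnn : ∀ s, 0 ≤ f s)
    (h1dens : ∀ s, 0 < s → ∫⁻ x, ENNReal.ofReal (h₁ x s) = 1)
    (h2dens : ∀ s, 0 < s → ∫⁻ x, ENNReal.ofReal (h₂ x s) = 1)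
    (hfsupp : ∀ s ≤ (0 : ℝ), f s = 0)
    (hfdens : ∫⁻ s in Set.Ioi (0 : ℝ), ENNReal.ofReal (f s) = 1)
    (X Y S : Ω → ℝ) (hX : Measurable X) (hY : Measurable Y) (hS : Measurable S)
    (hlaw : Measure.map (fun ω => (X ω, Y ω, S ω)) P =
      (volume : Measure (ℝ × ℝ × ℝ)).withDensity
        (fun p => ENNReal.ofReal (h₂ p.1 p.2.2 * h₁ p.2.1 p.2.2 * f p.2.2)))
    (uhat : ℝ → ℝ → ℝ) (huhat : Measurable (Function.uncurry uhat))
    (hnotie : P {ω | uhat (X ω) (S ω) = uhat (Y ω) (S ω)} = 0)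
    (E : Set ℝ) (hE : MeasurableSet E) :
    ENNReal.ofReal
        |(P {ω | uhat (Y ω) (S ω) < uhat (X ω) (S ω) ∧
              min (uhat (X ω) (S ω)) (uhat (Y ω) (S ω)) ∈ E}).toReal -
          (1 / 2) * (P {ω | min (uhat (X ω) (S ω)) (uhat (Y ω) (S ω)) ∈ E}).toReal|
      ≤ 2 * ∫⁻ s in Set.Ioi (0 : ℝ),
            (∫⁻ x, ENNReal.ofReal |h₁ x s - h₂ x s|) * ENNReal.ofReal (f s) :=
  stmt9_general P h₁ h₂ f hm1 hm2 hmf h1nn hfnn h1dens hfsupp X Y S hX hY hS hlaw uhat huhat hnotie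
    E hE
end

section
/- Let n ≥ 1 be an integer, ρ ∈ (0, 1), and M ≥ 1 a real number. Let B be a binomial random variable with n trials and success probability 1 − ρ. Then E[ B / (M + n − B) ] ≤ ( n / (M + n − 1) ) · ( (1 − ρ)/ρ ) · ( 1 − (1 − ρ)^n ). -/
open Finset

/-- for `B ~ Binomial(n, 1 − ρ)` with `ρ ∈ (0,1)` and `M ≥ 1`,
`E[B/(M + n − B)] ≤ (n/(M + n − 1))·((1 − ρ)/ρ)·(1 − (1 − ρ)^n)`, where the
expectation is written out via the binomial probability mass function. -/
theorem stmt11 (n : ℕ) (hn : 1 ≤ n) (ρ : ℝ) (hρ : ρ ∈ Set.Ioo (0 : ℝ) 1)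
    (M : ℝ) (hM : 1 ≤ M) :
    ∑ i ∈ Finset.range (n + 1),
        (n.choose i : ℝ) * (1 - ρ) ^ i * ρ ^ (n - i) * ((i : ℝ) / (M + n - i))
      ≤ ((n : ℝ) / (M + n - 1)) * ((1 - ρ) / ρ) * (1 - (1 - ρ) ^ n) := by
  obtain ⟨hρ0, hρ1⟩ := hρ
  have h1ρ : (0:ℝ) ≤ 1 - ρ := by linarith
  -- binomial theorem
  have hb : ∑ i ∈ Finset.range (n+1), (n.choose i : ℝ) * (1 - ρ) ^ i * ρ ^ (n - i) = 1 := by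
    have h := add_pow (1 - ρ) ρ n
    rw [show (1 - ρ) + ρ = (1:ℝ) by ring, one_pow] at h
    calc ∑ i ∈ Finset.range (n+1), (n.choose i : ℝ) * (1 - ρ) ^ i * ρ ^ (n - i)
        = ∑ i ∈ Finset.range (n+1), (1 - ρ) ^ i * ρ ^ (n - i) * (n.choose i : ℝ) := by
          apply Finset.sum_congr rfl; intro i _; ring
      _ = 1 := h.symm
  -- middle sum
  have hS : ∑ i ∈ Finset.range (n + 1),
      (n.choose i : ℝ) * (1 - ρ) ^ i * ρ ^ (n - i) * ((i : ℝ) / ((n : ℝ) + 1 - i))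
      = ((1 - ρ) / ρ) * (1 - (1 - ρ) ^ n) := by
    rw [Finset.sum_range_succ']
    simp only [Nat.cast_zero, zero_div, mul_zero, add_zero]
    have key : ∀ i ∈ Finset.range n,
        (n.choose (i+1) : ℝ) * (1 - ρ) ^ (i+1) * ρ ^ (n - (i+1)) *
          (((i+1 : ℕ) : ℝ) / ((n : ℝ) + 1 - ((i+1 : ℕ) : ℝ)))
        = ((1-ρ)/ρ) * ((n.choose i : ℝ) * (1 - ρ) ^ i * ρ ^ (n - i)) := by
      intro i hi
      have hin : i < n := Finset.mem_range.mp hi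
      have hc : (n.choose (i+1) : ℝ) * ((i:ℝ)+1) = (n.choose i : ℝ) * ((n:ℝ) - i) := by
        have h := Nat.choose_succ_right_eq n i
        have h2 : ((n.choose (i+1) * (i+1) : ℕ) : ℝ) = ((n.choose i * (n - i) : ℕ) : ℝ) := by
          exact_mod_cast congrArg (fun x : ℕ => (x : ℝ)) h
        push_cast [Nat.cast_sub hin.le] at h2
        linarith
      have hpow : ρ ^ (n - i) = ρ ^ (n - (i+1)) * ρ := by
        rw [← pow_succ]
        congr 1
        omega
      have hdpos : (0:ℝ) < (n:ℝ) - i := by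
        have : (i:ℝ) < n := by exact_mod_cast hin
        linarith
      have hden : (n : ℝ) + 1 - (((i:ℕ):ℝ)+1) = (n:ℝ) - i := by ring
      have hfrac : ((i:ℝ)+1) / ((n:ℝ) - i) * (n.choose (i+1) : ℝ) = (n.choose i : ℝ) := by
        rw [div_mul_eq_mul_div, div_eq_iff hdpos.ne']
        linarith [hc]
      push_cast
      rw [hden, hpow, ← hfrac]
      field_simp
      ring
    rw [Finset.sum_congr rfl key, ← Finset.mul_sum]
    congr 1
    have h2 := Finset.sum_range_succ (fun i => (n.choose i : ℝ) * (1 - ρ) ^ i * ρ ^ (n - i)) n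
    rw [h2] at hb
    simp only [Nat.choose_self, Nat.cast_one, Nat.sub_self, pow_zero, one_mul, mul_one] at hb
    linarith
  -- termwise inequality
  have hstep : ∑ i ∈ Finset.range (n + 1),
        (n.choose i : ℝ) * (1 - ρ) ^ i * ρ ^ (n - i) * ((i : ℝ) / (M + n - i))
      ≤ ∑ i ∈ Finset.range (n + 1),
        ((n : ℝ) / (M + n - 1)) *
          ((n.choose i : ℝ) * (1 - ρ) ^ i * ρ ^ (n - i) * ((i : ℝ) / ((n : ℝ) + 1 - i))) := by
    apply Finset.sum_le_sum
    intro i hi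
    have hin : i ≤ n := Nat.lt_succ_iff.mp (Finset.mem_range.mp hi)
    have hinR : (i:ℝ) ≤ n := by exact_mod_cast hin
    have hc0 : (0:ℝ) ≤ (n.choose i : ℝ) * (1 - ρ) ^ i * ρ ^ (n - i) := by positivity
    have hd1 : (0:ℝ) < M + n - i := by linarith
    have hd2 : (0:ℝ) < M + n - 1 := by
      have : (1:ℝ) ≤ n := by exact_mod_cast hn
      linarith
    have hd3 : (0:ℝ) < (n:ℝ) + 1 - i := by linarith
    have hii : (0:ℝ) ≤ (i:ℝ) * ((i:ℝ) - 1) := by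
      rcases Nat.eq_zero_or_pos i with h | h
      · simp [h]
      · have : (1:ℝ) ≤ i := by exact_mod_cast h
        nlinarith
    have hfrac : (i : ℝ) / (M + n - i) ≤ ((n : ℝ) / (M + n - 1)) * ((i : ℝ) / ((n : ℝ) + 1 - i)) := by
      rw [div_mul_div_comm, div_le_div_iff₀ hd1 (by positivity)]
      nlinarith [mul_nonneg (sub_nonneg.mpr hM) hii]
    calc (n.choose i : ℝ) * (1 - ρ) ^ i * ρ ^ (n - i) * ((i : ℝ) / (M + n - i))
        ≤ (n.choose i : ℝ) * (1 - ρ) ^ i * ρ ^ (n - i) *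
            (((n : ℝ) / (M + n - 1)) * ((i : ℝ) / ((n : ℝ) + 1 - i))) :=
          mul_le_mul_of_nonneg_left hfrac hc0
      _ = ((n : ℝ) / (M + n - 1)) *
            ((n.choose i : ℝ) * (1 - ρ) ^ i * ρ ^ (n - i) * ((i : ℝ) / ((n : ℝ) + 1 - i))) := by
          ring
  calc ∑ i ∈ Finset.range (n + 1),
        (n.choose i : ℝ) * (1 - ρ) ^ i * ρ ^ (n - i) * ((i : ℝ) / (M + n - i))
      ≤ ∑ i ∈ Finset.range (n + 1),
        ((n : ℝ) / (M + n - 1)) *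
          ((n.choose i : ℝ) * (1 - ρ) ^ i * ρ ^ (n - i) * ((i : ℝ) / ((n : ℝ) + 1 - i))) := hstep
    _ = ((n : ℝ) / (M + n - 1)) * (((1 - ρ) / ρ) * (1 - (1 - ρ) ^ n)) := by
        rw [← Finset.mul_sum, hS]
    _ = ((n : ℝ) / (M + n - 1)) * ((1 - ρ) / ρ) * (1 - (1 - ρ) ^ n) := by ring
end

section
/- Let n ≥ 1 be an integer and ρ ∈ (0, 1]. Define M = max( 1, 1 + n·(1 − 2ρ − (1 − ρ)·ρ^n)/ρ ). Let B be a binomial random variable with n trials and success probability 1 − ρ. Then E[ B / (M + n − B) ] ≤ 1. -/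
open Finset

/-- for `B ~ Binomial(n, 1 − ρ)` with `ρ ∈ (0,1]` and
`M = max(1, 1 + n·(1 − 2ρ − (1 − ρ)·ρⁿ)/ρ)`, we have `E[B/(M + n − B)] ≤ 1`, where the
expectation is written out via the binomial probability mass function. -/
theorem stmt12 (n : ℕ) (hn : 1 ≤ n) (ρ : ℝ) (hρ : ρ ∈ Set.Ioc (0 : ℝ) 1) :
    ∑ i ∈ Finset.range (n + 1),
        (n.choose i : ℝ) * (1 - ρ) ^ i * ρ ^ (n - i) *
          ((i : ℝ) /
            (max 1 (1 + (n : ℝ) * (1 - 2 * ρ - (1 - ρ) * ρ ^ n) / ρ) + n - i))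
      ≤ 1 := by
  obtain ⟨hρ0, hρ1⟩ := hρ
  set q : ℝ := 1 - ρ with hq
  have hq0 : 0 ≤ q := by rw [hq]; linarith
  have hq1 : q ≤ 1 := by rw [hq]; linarith
  have hqρ1 : q + ρ = 1 := by rw [hq]; ring
  clear_value q
  set M : ℝ := max 1 (1 + (n : ℝ) * (1 - 2 * ρ - q * ρ ^ n) / ρ) with hMdef
  have hM1 : (1:ℝ) ≤ M := le_max_left _ _
  have hn1 : (1:ℝ) ≤ (n:ℝ) := by exact_mod_cast hn
  set S : ℝ := ∑ i ∈ Finset.range (n+1),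
      (n.choose i : ℝ) * q ^ i * ρ ^ (n - i) * ((i:ℝ) / ((n:ℝ) + 1 - i)) with hS
  clear_value M S
  have hSval : ρ * S = q * (1 - q ^ n) := by
    have h1 : S = q * ∑ j ∈ Finset.range n, (n.choose j : ℝ) * q ^ j * ρ ^ (n - 1 - j) := by
      rw [hS, Finset.sum_range_succ']
      simp only [Nat.cast_zero, zero_div, mul_zero, add_zero]
      rw [Finset.mul_sum]
      refine Finset.sum_congr rfl ?_
      intro j hj
      rw [Finset.mem_range] at hj
      have hjn : (j:ℝ) < (n:ℝ) := by exact_mod_cast hj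
      have hne : ((n:ℝ) - j) ≠ 0 := by linarith
      have key : (n.choose (j+1) : ℝ) * ((j:ℝ)+1) = (n.choose j : ℝ) * ((n:ℝ) - j) := by
        rw [show ((n:ℝ) - (j:ℝ)) = ((n - j : ℕ) : ℝ) from (Nat.cast_sub hj.le).symm]
        exact_mod_cast Nat.choose_succ_right_eq n j
      have hfrac : (n.choose (j+1) : ℝ) * (((j:ℝ)+1) / ((n:ℝ) - j)) = (n.choose j : ℝ) := by
        rw [← mul_div_assoc, key, mul_div_assoc, div_self hne, mul_one]
      have hsub : n - (j+1) = n - 1 - j := by omega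
      rw [hsub]
      have hden : (n:ℝ) + 1 - ((j:ℕ):ℝ) - 1 = (n:ℝ) - (j:ℝ) := by ring
      push_cast
      rw [show (n:ℝ) + 1 - ((j:ℝ) + 1) = (n:ℝ) - (j:ℝ) by ring]
      calc (n.choose (j+1) : ℝ) * q ^ (j+1) * ρ ^ (n-1-j) * (((j:ℝ)+1) / ((n:ℝ) - j))
          = ((n.choose (j+1) : ℝ) * (((j:ℝ)+1) / ((n:ℝ) - j))) * (q ^ (j+1) * ρ ^ (n-1-j)) := by
            ring
        _ = (n.choose j : ℝ) * (q ^ (j+1) * ρ ^ (n-1-j)) := by rw [hfrac]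
        _ = q * ((n.choose j : ℝ) * q ^ j * ρ ^ (n-1-j)) := by ring
    rw [h1, ← mul_assoc, mul_comm ρ q, mul_assoc, Finset.mul_sum]
    have h2 : ∀ j ∈ Finset.range n, ρ * ((n.choose j : ℝ) * q ^ j * ρ ^ (n - 1 - j))
        = (n.choose j : ℝ) * q ^ j * ρ ^ (n - j) := by
      intro j hj
      rw [Finset.mem_range] at hj
      have h3 : n - j = (n - 1 - j) + 1 := by omega
      rw [h3, pow_succ]
      ring
    rw [Finset.sum_congr rfl h2]
    have hb : ∑ i ∈ Finset.range (n+1), (n.choose i : ℝ) * q ^ i * ρ ^ (n - i) = (q + ρ)^n := by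
      rw [add_pow]
      refine Finset.sum_congr rfl ?_
      intro i _
      ring
    have hqr : q + ρ = 1 := hqρ1
    have hb2 : ∑ i ∈ Finset.range n, (n.choose i : ℝ) * q ^ i * ρ ^ (n - i)
        = 1 - q ^ n := by
      have hb' := hb
      rw [Finset.sum_range_succ, hqr, one_pow, Nat.choose_self, Nat.sub_self, pow_zero] at hb'
      push_cast at hb'
      linarith
    rw [hb2]
  have hD : (0:ℝ) < M + (n:ℝ) - 1 := by linarith
  have hmain : ∑ i ∈ Finset.range (n + 1),
      (n.choose i : ℝ) * q ^ i * ρ ^ (n - i) * ((i : ℝ) / (M + n - i))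
      ≤ ((n:ℝ) / (M + (n:ℝ) - 1)) * S := by
    rw [hS, Finset.mul_sum]
    refine Finset.sum_le_sum ?_
    intro i hi
    rw [Finset.mem_range] at hi
    have hin : (i:ℝ) ≤ (n:ℝ) := by exact_mod_cast Nat.lt_succ_iff.mp hi
    have hi0 : (0:ℝ) ≤ (i:ℝ) := Nat.cast_nonneg i
    have hd1 : (0:ℝ) < M + (n:ℝ) - (i:ℝ) := by linarith
    have hd2 : (0:ℝ) < (n:ℝ) + 1 - (i:ℝ) := by linarith
    have hc : (0:ℝ) ≤ (n.choose i : ℝ) * q ^ i * ρ ^ (n - i) :=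
      mul_nonneg (mul_nonneg (Nat.cast_nonneg _) (pow_nonneg hq0 _)) (pow_nonneg hρ0.le _)
    have hii : (0:ℝ) ≤ (i:ℝ) * ((i:ℝ) - 1) := by
      rcases Nat.eq_zero_or_pos i with h | h
      · simp [h]
      · have : (1:ℝ) ≤ (i:ℝ) := by exact_mod_cast h
        nlinarith
    have hptw : (i : ℝ) / (M + n - i) ≤ ((n:ℝ) / (M + (n:ℝ) - 1)) * ((i:ℝ) / ((n:ℝ) + 1 - i)) := by
      rw [div_mul_div_comm, div_le_div_iff₀ hd1 (mul_pos hD hd2)]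
      nlinarith [hii, hM1]
    calc (n.choose i : ℝ) * q ^ i * ρ ^ (n - i) * ((i : ℝ) / (M + n - i))
        ≤ (n.choose i : ℝ) * q ^ i * ρ ^ (n - i) * (((n:ℝ) / (M + (n:ℝ) - 1)) * ((i:ℝ) / ((n:ℝ) + 1 - i))) :=
          mul_le_mul_of_nonneg_left hptw hc
      _ = ((n:ℝ) / (M + (n:ℝ) - 1)) * ((n.choose i : ℝ) * q ^ i * ρ ^ (n - i) * ((i:ℝ) / ((n:ℝ) + 1 - i))) := by ring
  refine le_trans hmain ?_
  have hkey : (n:ℝ) * (q * (1 - q^n)) ≤ ρ * (M + (n:ℝ) - 1) := by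
    clear hS hSval hmain
    have hqn : (0:ℝ) ≤ q ^ n := pow_nonneg hq0 n
    have hρn : (0:ℝ) ≤ ρ ^ n := pow_nonneg hρ0.le n
    rcases le_total (1 + (n : ℝ) * (1 - 2 * ρ - q * ρ ^ n) / ρ) 1 with h | h
    · have hM : M = 1 := by rw [hMdef, max_eq_left h]
      have hA : 1 - 2 * ρ - q * ρ ^ n ≤ 0 := by
        have h4 : (n : ℝ) * (1 - 2 * ρ - q * ρ ^ n) / ρ ≤ 0 := by linarith
        have h5 : (n : ℝ) * (1 - 2 * ρ - q * ρ ^ n) ≤ 0 := by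
          by_contra hcon
          push_neg at hcon
          have := div_pos hcon hρ0
          linarith
        nlinarith
      rw [hM]
      have hqρ : q * (1 - q^n) ≤ ρ := by
        rcases le_total ρ q with hle | hle
        · have : ρ ^ n ≤ q ^ n := pow_le_pow_left₀ hρ0.le hle n
          nlinarith
        · have : q ^ n ≤ 1 := pow_le_one₀ hq0 hq1
          nlinarith
      nlinarith
    · have hM : M = 1 + (n : ℝ) * (1 - 2 * ρ - q * ρ ^ n) / ρ := by rw [hMdef, max_eq_right h]
      have hA : 0 ≤ 1 - 2 * ρ - q * ρ ^ n := by
        have h4 : 0 ≤ (n : ℝ) * (1 - 2 * ρ - q * ρ ^ n) / ρ := by linarith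
        have h5 : 0 ≤ (n : ℝ) * (1 - 2 * ρ - q * ρ ^ n) := by
          by_contra hcon
          push_neg at hcon
          have := div_neg_of_neg_of_pos hcon hρ0
          linarith
        nlinarith
      have hρq : ρ ≤ q := by linarith [mul_nonneg hq0 hρn, hA, hqρ1]
      have hpow : ρ ^ n ≤ q ^ n := pow_le_pow_left₀ hρ0.le hρq n
      rw [hM]
      have hexp : ρ * (1 + (n : ℝ) * (1 - 2 * ρ - q * ρ ^ n) / ρ + (n:ℝ) - 1)
          = (n:ℝ) * (1 - 2 * ρ - q * ρ ^ n) + ρ * (n:ℝ) := by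
        field_simp
        ring
      rw [hexp]
      nlinarith [mul_nonneg (mul_nonneg (le_trans zero_le_one hn1) hq0) (sub_nonneg.mpr hpow)]
  have hS2 : S = q * (1 - q^n) / ρ := by
    rw [eq_div_iff hρ0.ne']
    linarith [hSval]
  rw [hS2]
  rw [div_mul_eq_mul_div, div_le_one hD]
  calc (n:ℝ) * (q * (1 - q^n) / ρ) = ((n:ℝ) * (q * (1 - q^n))) / ρ := by ring
    _ ≤ M + (n:ℝ) - 1 := by
        rw [div_le_iff₀ hρ0]
        nlinarith [hkey]
end

section
/- Let ξ₁, …, ξ_n be i.i.d. Bernoulli(q) random variables with q ∈ [0, 1], let V_k = Σ_{j=1}^k ξ_j and Ṽ_k = k − V_k, and let M ≥ 1 be a real number. Then the process M_k = V_k / (M + Ṽ_k) is a supermartingale in reverse time with respect to the reverse filtration G_k = σ(V_j : k ≤ j ≤ n): for every 1 ≤ k ≤ n − 1, E[ V_k / (M + k − V_k) | G_{k+1} ] ≤ V_{k+1} / (M + (k+1) − V_{k+1}) almost surely. -/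
open MeasureTheory ProbabilityTheory Finset

/-- `V_k = Σ_{j=1}^k ξ_j`: the number of successes among the first `k` of the `ξ_j`. -/
def Vcount {Ω : Type*} {n : ℕ} (ξ : Fin n → Ω → Bool) (k : ℕ) (ω : Ω) : ℕ :=
  (Finset.univ.filter (fun j : Fin n => (j : ℕ) < k ∧ ξ j ω = true)).card

/-- The reverse filtration `G_k = σ(V_j : k ≤ j ≤ n)`. -/
def revFilt {Ω : Type*} [MeasurableSpace Ω] {n : ℕ} (ξ : Fin n → Ω → Bool) (k : ℕ) :
    MeasurableSpace Ω :=
  ⨆ j ∈ Finset.Icc k n, MeasurableSpace.comap (fun ω => Vcount ξ j ω) inferInstance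

/-!
Every `V_j` with `j ≥ k + 1` is invariant under permutations of the first `k + 1` trials, and
the law of an i.i.d. vector is invariant under all permutations. Hence, given `G_{k+1}`, the
trial `ξ_{k+1}` is as likely to be a success as any of the first `k + 1` trials, so
`E[ξ_{k+1} | G_{k+1}] = V_{k+1} / (k + 1)`. Since `V_k = V_{k+1} - ξ_{k+1}`, the conditional
expectation of `M_k` is an explicit function of `v = V_{k+1}`, and it falls short of
`v / (M + k + 1 - v)` by `v (M - 1) / ((k + 1) (M + k + 1 - v) (M + k - v)) ≥ 0`.
-/

noncomputable def trueIndicator {Ω : Type*} (ζ : Ω → Bool) : Ω → ℝ :=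
  {ω | ζ ω = true}.indicator 1

lemma norm_trueIndicator_le {Ω : Type*} (ζ : Ω → Bool) (ω : Ω) : ‖trueIndicator ζ ω‖ ≤ 1 := by
  by_cases h : ζ ω = true <;> simp [trueIndicator, h]

lemma Equiv.Perm.val_apply_lt_iff_of_forall_le_apply_eq {n m : ℕ} {σ : Equiv.Perm (Fin n)}
    (hσ : ∀ j : Fin n, m ≤ j → σ j = j) {i : ℕ} (hi : m ≤ i) (j : Fin n) :
    (σ j : ℕ) < i ↔ (j : ℕ) < i := by
  by_cases hj : m ≤ (j : ℕ)
  · rw [hσ j hj]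
  · have hσj : (σ j : ℕ) < m := by
      by_contra! h
      exact hj (σ.injective (hσ (σ j) h) ▸ h)
    omega

section Counting

variable {Ω : Type*} {n : ℕ}

lemma Vcount_le (ξ : Fin n → Ω → Bool) (m : ℕ) (ω : Ω) : Vcount ξ m ω ≤ m :=
  calc Vcount ξ m ω ≤ #{j : Fin n | (j : ℕ) < m} := card_le_card fun j hj => by simp_all
    _ ≤ m := Fin.card_filter_val_lt.trans_le (min_le_right n m)

lemma Vcount_eq_sum_trueIndicator (ξ : Fin n → Ω → Bool) (m : ℕ) (ω : Ω) :
    (Vcount ξ m ω : ℝ) = ∑ j : Fin n, if (j : ℕ) < m then trueIndicator (ξ j) ω else 0 := by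
  rw [Vcount, card_filter]
  push_cast
  refine sum_congr rfl fun j _ => ?_
  by_cases hj : (j : ℕ) < m <;> by_cases hξ : ξ j ω = true <;> simp [hj, hξ, trueIndicator]

lemma Vcount_succ (ξ : Fin n → Ω → Bool) {k : ℕ} (hk : k < n) (ω : Ω) :
    (Vcount ξ (k + 1) ω : ℝ) = Vcount ξ k ω + trueIndicator (ξ ⟨k, hk⟩) ω := by
  have hsplit : ∀ j : Fin n, ∀ a : ℝ, (if (j : ℕ) < k + 1 then a else 0) =
      (if (j : ℕ) < k then a else 0) + if j = ⟨k, hk⟩ then a else 0 := by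
    intro j a
    split_ifs <;> simp_all [Fin.ext_iff] <;> omega
  simp only [Vcount_eq_sum_trueIndicator, hsplit, sum_add_distrib, sum_ite_eq']
  simp

-- `Vcount (fun j x => x j)` is the counting function on the canonical space `Fin n → Bool`.
lemma Vcount_coord_comp_perm {σ : Equiv.Perm (Fin n)} {m : ℕ}
    (hσ : ∀ j : Fin n, m ≤ j → σ j = j) {i : ℕ} (hi : m ≤ i) (x : Fin n → Bool) :
    Vcount (fun j (x : Fin n → Bool) => x j) i (x ∘ σ) = Vcount (fun j x => x j) i x :=
  card_equiv σ fun j => by simp [σ.val_apply_lt_iff_of_forall_le_apply_eq hσ hi]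

end Counting

section Measurability

variable {Ω : Type*} [MeasurableSpace Ω] {n : ℕ}

lemma measurable_trueIndicator {ζ : Ω → Bool} (hζ : Measurable ζ) :
    Measurable (trueIndicator ζ) :=
  measurable_const.indicator (hζ (measurableSet_singleton true))

lemma integrable_trueIndicator {μ : Measure Ω} [IsFiniteMeasure μ] {ζ : Ω → Bool}
    (hζ : Measurable ζ) : Integrable (trueIndicator ζ) μ :=
  (integrable_const 1).indicator (hζ (measurableSet_singleton true))

lemma integrable_comp_Vcount {μ : Measure Ω} [IsFiniteMeasure μ] {ξ : Fin n → Ω → Bool}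
    (hmeas : ∀ i, Measurable (ξ i)) (f : ℕ → ℝ) (m : ℕ) :
    Integrable (fun ω => f (Vcount ξ m ω)) μ :=
  (Integrable.of_finite (f := fun x => f (Vcount (fun j (x : Fin n → Bool) => x j) m x)))
    |>.comp_measurable (measurable_pi_lambda _ hmeas)

lemma revFilt_le {ξ : Fin n → Ω → Bool} (hmeas : ∀ i, Measurable (ξ i)) (m : ℕ) :
    revFilt ξ m ≤ ‹MeasurableSpace Ω› :=
  iSup₂_le fun j _ => Measurable.comap_le <|
    (measurable_of_finite (Vcount (fun j (x : Fin n → Bool) => x j) j)).comp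
      (measurable_pi_lambda _ hmeas)

lemma measurable_Vcount_revFilt (ξ : Fin n → Ω → Bool) {m j : ℕ} (hj : j ∈ Icc m n) :
    Measurable[revFilt ξ m] (Vcount ξ j) :=
  Measurable.of_comap_le <| le_iSup₂ (f := fun j (_ : j ∈ Icc m n) =>
    MeasurableSpace.comap (Vcount ξ j) inferInstance) j hj

lemma revFilt_le_comap_invariants (ξ : Fin n → Ω → Bool) {σ : Equiv.Perm (Fin n)} {m : ℕ}
    (hσ : ∀ j : Fin n, m ≤ j → σ j = j) :
    revFilt ξ m ≤ (MeasurableSpace.invariants fun x : Fin n → Bool => x ∘ σ).comap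
      fun ω i => ξ i ω := by
  refine iSup₂_le fun i hi => ?_
  rw [show (fun ω => Vcount ξ i ω) = Vcount (fun j (x : Fin n → Bool) => x j) i ∘
    fun ω j => ξ j ω from rfl, ← MeasurableSpace.comap_comp]
  refine MeasurableSpace.comap_mono (Measurable.comap_le ?_)
  refine MeasurableSpace.measurable_invariants_dom.2 ⟨measurable_of_finite _, fun s _ => ?_⟩
  rw [Function.comp_def]
  simp_rw [Vcount_coord_comp_perm hσ (mem_Icc.1 hi).1]

end Measurability

lemma condExp_add_mul_ae_eq {Ω : Type*} {m m₀ : MeasurableSpace Ω} {μ : Measure[m₀] Ω}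
    {a b g : Ω → ℝ} (hm : m ≤ m₀) [SigmaFinite (μ.trim hm)] (ha : StronglyMeasurable[m] a)
    (hb : StronglyMeasurable[m] b) (hai : Integrable a μ) (hbg : Integrable (b * g) μ)
    (hg : Integrable g μ) : μ[a + b * g | m] =ᵐ[μ] a + b * μ[g | m] := by
  filter_upwards [condExp_add hai hbg m, condExp_mul_of_stronglyMeasurable_left hb hbg hg]
    with ω hadd hmul
  rw [hadd, Pi.add_apply, hmul, condExp_of_stronglyMeasurable hm ha hai, Pi.add_apply]

section Exchangeable

variable {Ω : Type*} [MeasurableSpace Ω] {P : Measure Ω} [IsProbabilityMeasure P]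

lemma map_eq_map_of_measure_eq_true {ξ ζ : Ω → Bool} (hξ : Measurable ξ) (hζ : Measurable ζ)
    (h : P {ω | ξ ω = true} = P {ω | ζ ω = true}) : P.map ξ = P.map ζ := by
  have htrue : P.map ξ {true} = P.map ζ {true} := by
    rwa [Measure.map_apply hξ (measurableSet_singleton _),
      Measure.map_apply hζ (measurableSet_singleton _)]
  have : IsProbabilityMeasure (P.map ξ) := Measure.isProbabilityMeasure_map hξ.aemeasurable
  have : IsProbabilityMeasure (P.map ζ) := Measure.isProbabilityMeasure_map hζ.aemeasurable
  refine Measure.ext_of_singleton fun b => ?_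
  cases b
  · rw [show ({false} : Set Bool) = {true}ᶜ by ext b; simp,
      prob_compl_eq_one_sub (measurableSet_singleton _),
      prob_compl_eq_one_sub (measurableSet_singleton _), htrue]
  · exact htrue

lemma ProbabilityTheory.iIndepFun.measurePreserving_comp_perm {ι β : Type*} [Fintype ι]
    [MeasurableSpace β] {ξ : ι → Ω → β} (hmeas : ∀ i, Measurable (ξ i)) (hindep : iIndepFun ξ P)
    (hident : ∀ i j, P.map (ξ i) = P.map (ξ j)) (σ : Equiv.Perm ι) :
    MeasurePreserving (fun x : ι → β => x ∘ σ) (P.map fun ω i => ξ i ω)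
      (P.map fun ω i => ξ i ω) := by
  rw [hindep.map_fun_eq_pi_map fun i => (hmeas i).aemeasurable]
  convert measurePreserving_piCongrLeft (α := fun _ => β) (fun i => P.map (ξ i)) σ.symm using 2
  · ext i
    simp [MeasurableEquiv.coe_piCongrLeft, Equiv.piCongrLeft_apply_eq_cast]
  · exact funext fun i => hident _ _

variable {n : ℕ} {ξ : Fin n → Ω → Bool}

lemma measure_inter_eq_of_measurableSet_revFilt (hmeas : ∀ i, Measurable (ξ i))
    (hindep : iIndepFun ξ P) (hident : ∀ i j, P.map (ξ i) = P.map (ξ j)) {m : ℕ} {j K : Fin n}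
    (hj : (j : ℕ) < m) (hK : (K : ℕ) < m) {B : Set Ω} (hB : MeasurableSet[revFilt ξ m] B) :
    P (B ∩ {ω | ξ j ω = true}) = P (B ∩ {ω | ξ K ω = true}) := by
  have hσ : ∀ l : Fin n, m ≤ l → Equiv.swap j K l = l := fun l hl =>
    Equiv.swap_apply_of_ne_of_ne (Fin.ne_of_val_ne (by omega)) (Fin.ne_of_val_ne (by omega))
  obtain ⟨B', ⟨-, hinv⟩, rfl⟩ := revFilt_le_comap_invariants ξ hσ B hB
  have hΞ : Measurable fun ω i => ξ i ω := measurable_pi_lambda _ hmeas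
  have hpre : ∀ l : Fin n, (fun ω i => ξ i ω) ⁻¹' B' ∩ {ω | ξ l ω = true} =
      (fun ω i => ξ i ω) ⁻¹' (B' ∩ {x | x l = true}) := fun l => rfl
  have hswap : (fun x : Fin n → Bool => x ∘ Equiv.swap j K) ⁻¹' (B' ∩ {x | x K = true}) =
      B' ∩ {x | x j = true} := by
    rw [Set.preimage_inter, hinv]
    ext x
    simp
  rw [hpre, hpre, ← Measure.map_apply hΞ (Set.toFinite _).measurableSet,
    ← Measure.map_apply hΞ (Set.toFinite _).measurableSet, ← hswap,
    (hindep.measurePreserving_comp_perm hmeas hident _).measure_preimage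
      (Set.toFinite _).measurableSet.nullMeasurableSet]

lemma setIntegral_trueIndicator_eq_of_measurableSet_revFilt (hmeas : ∀ i, Measurable (ξ i))
    (hindep : iIndepFun ξ P) (hident : ∀ i j, P.map (ξ i) = P.map (ξ j)) {m : ℕ} {j K : Fin n}
    (hj : (j : ℕ) < m) (hK : (K : ℕ) < m) {B : Set Ω} (hB : MeasurableSet[revFilt ξ m] B) :
    ∫ ω in B, trueIndicator (ξ j) ω ∂P = ∫ ω in B, trueIndicator (ξ K) ω ∂P := by
  have hset : ∀ l, MeasurableSet {ω | ξ l ω = true} := fun l =>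
    hmeas l (measurableSet_singleton true)
  rw [trueIndicator, trueIndicator, integral_indicator_one (hset j),
    integral_indicator_one (hset K), measureReal_restrict_apply (hset j),
    measureReal_restrict_apply (hset K), Set.inter_comm, Set.inter_comm _ B, measureReal_def,
    measureReal_def, measure_inter_eq_of_measurableSet_revFilt hmeas hindep hident hj hK hB]

lemma condExp_trueIndicator_ae_eq_Vcount_div (hmeas : ∀ i, Measurable (ξ i))
    (hindep : iIndepFun ξ P) (hident : ∀ i j, P.map (ξ i) = P.map (ξ j)) {m : ℕ} (hm : m ≤ n)
    {K : Fin n} (hK : (K : ℕ) < m) :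
    P[trueIndicator (ξ K) | revFilt ξ m] =ᵐ[P] fun ω => (Vcount ξ m ω : ℝ) / m := by
  refine (ae_eq_condExp_of_forall_setIntegral_eq (revFilt_le hmeas m)
    (integrable_trueIndicator (hmeas K))
    (fun s _ _ => (integrable_comp_Vcount hmeas (fun v => (v : ℝ) / m) m).integrableOn)
    (fun B hB _ => ?_) ?_).symm
  · have hsum : ∫ ω in B, (Vcount ξ m ω : ℝ) ∂P = m * ∫ ω in B, trueIndicator (ξ K) ω ∂P := by
      simp_rw [Vcount_eq_sum_trueIndicator]
      rw [integral_finsetSum _ fun j _ => ?_]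
      · calc ∑ j : Fin n, ∫ ω in B, (if (j : ℕ) < m then trueIndicator (ξ j) ω else 0) ∂P
            = ∑ j : Fin n, if (j : ℕ) < m then ∫ ω in B, trueIndicator (ξ K) ω ∂P else 0 := by
              refine sum_congr rfl fun j _ => ?_
              split_ifs with hj
              exacts [setIntegral_trueIndicator_eq_of_measurableSet_revFilt hmeas hindep hident
                hj hK hB, integral_zero _ _]
          _ = m * ∫ ω in B, trueIndicator (ξ K) ω ∂P := by
              rw [sum_ite, sum_const_zero, add_zero, sum_const, Fin.card_filter_val_lt,
                min_eq_right hm, nsmul_eq_mul]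
      · by_cases hj : (j : ℕ) < m
        · simpa only [hj, if_true] using (integrable_trueIndicator (hmeas j)).restrict
        · simpa only [hj, if_false] using integrable_const (0 : ℝ)
    rw [integral_div, hsum, mul_div_cancel_left₀ _ (Nat.cast_ne_zero.2 (by omega))]
  · exact ((measurable_of_countable fun v : ℕ => (v : ℝ) / m).comp
      (measurable_Vcount_revFilt ξ (mem_Icc.2 ⟨le_rfl, hm⟩))).aestronglyMeasurable

end Exchangeable

lemma ratio_average_le {M k v : ℝ} (hM : 1 ≤ M) (hk : 0 ≤ k) (hv : 0 ≤ v) (hvk : v ≤ k + 1) :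
    v / (M + k - v) + ((v - 1) / (M + k - (v - 1)) - v / (M + k - v)) * (v / (k + 1))
      ≤ v / (M + (k + 1) - v) := by
  have hpos : 0 < M + (k + 1) - v := by linarith
  rw [show M + k - (v - 1) = M + (k + 1) - v by ring]
  rcases (show 0 ≤ M + k - v by linarith).eq_or_lt with hzero | hpos'
  · have hv' : v = k + 1 := by linarith
    rw [← hzero, div_zero, sub_zero, zero_add, hv', div_self (by linarith), mul_one]
    gcongr <;> linarith
  · rw [← sub_nonneg]
    have hgap : v / (M + (k + 1) - v) - (v / (M + k - v) +
        ((v - 1) / (M + (k + 1) - v) - v / (M + k - v)) * (v / (k + 1))) =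
        v * (M - 1) / ((k + 1) * (M + (k + 1) - v) * (M + k - v)) := by
      field_simp
      ring
    rw [hgap]
    have : 0 ≤ M - 1 := by linarith
    positivity

theorem stmt14_general {Ω : Type*} [MeasurableSpace Ω] (P : Measure Ω) [IsProbabilityMeasure P]
    (n : ℕ) (hn : 1 ≤ n) (q : ℝ)
    (ξ : Fin n → Ω → Bool) (hmeas : ∀ i, Measurable (ξ i))
    (hindep : iIndepFun ξ P)
    (hbern : ∀ i, P {ω | ξ i ω = true} = ENNReal.ofReal q)
    (M : ℝ) (hM : 1 ≤ M)
    (k : ℕ) (hk2 : k ≤ n - 1) :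
    P[fun ω => (Vcount ξ k ω : ℝ) / (M + k - Vcount ξ k ω) | revFilt ξ (k + 1)]
      ≤ᵐ[P] fun ω => (Vcount ξ (k + 1) ω : ℝ) / (M + (k + 1) - Vcount ξ (k + 1) ω) := by
  have hkn : k < n := by omega
  -- the paper's `ξ_{k+1}`: trials are indexed from `0`
  set K : Fin n := ⟨k, hkn⟩
  set f₀ : ℕ → ℝ := fun v => v / (M + k - v)
  set f₁ : ℕ → ℝ := fun v => (v - 1) / (M + k - (v - 1))
  have hX : (fun ω => (Vcount ξ k ω : ℝ) / (M + k - Vcount ξ k ω)) =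
      f₀ ∘ Vcount ξ (k + 1) + (f₁ - f₀) ∘ Vcount ξ (k + 1) * trueIndicator (ξ K) := by
    funext ω
    rw [show (Vcount ξ k ω : ℝ) = Vcount ξ (k + 1) ω - trueIndicator (ξ K) ω by
      rw [Vcount_succ ξ hkn]; ring]
    by_cases h : ξ K ω = true <;> simp [trueIndicator, h, f₀, f₁]
  have hV : Measurable[revFilt ξ (k + 1)] (Vcount ξ (k + 1)) :=
    measurable_Vcount_revFilt ξ (mem_Icc.2 ⟨le_rfl, hkn⟩)
  have hident : ∀ i j, P.map (ξ i) = P.map (ξ j) := fun i j =>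
    map_eq_map_of_measure_eq_true (hmeas i) (hmeas j) ((hbern i).trans (hbern j).symm)
  have hpull := condExp_add_mul_ae_eq (revFilt_le hmeas (k + 1))
    ((measurable_of_countable f₀).comp hV).stronglyMeasurable
    ((measurable_of_countable (f₁ - f₀)).comp hV).stronglyMeasurable
    (integrable_comp_Vcount hmeas f₀ (k + 1))
    ((integrable_comp_Vcount hmeas (f₁ - f₀) (k + 1)).mul_bdd
      (measurable_trueIndicator (hmeas K)).aestronglyMeasurable
      (ae_of_all _ (norm_trueIndicator_le (ξ K))))
    (integrable_trueIndicator (μ := P) (hmeas K))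
  filter_upwards [hpull, condExp_trueIndicator_ae_eq_Vcount_div hmeas hindep hident hkn
    (m := k + 1) (K := K) (lt_add_one k)] with ω hω hξK
  rw [hX, hω, Pi.add_apply, Pi.mul_apply, hξK, Nat.cast_add_one]
  exact ratio_average_le hM k.cast_nonneg (Nat.cast_nonneg _)
    (by exact_mod_cast Vcount_le ξ (k + 1) ω)

/-- `M_k = V_k/(M + Ṽ_k)` with `Ṽ_k = k − V_k` is a supermartingale in
reverse time: `E[V_k/(M + k − V_k) | G_{k+1}] ≤ V_{k+1}/(M + (k+1) − V_{k+1})` a.s. -/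
theorem stmt14 {Ω : Type*} [MeasurableSpace Ω] (P : Measure Ω) [IsProbabilityMeasure P]
    (n : ℕ) (hn : 1 ≤ n) (q : ℝ) (hq : q ∈ Set.Icc (0 : ℝ) 1)
    (ξ : Fin n → Ω → Bool) (hmeas : ∀ i, Measurable (ξ i))
    (hindep : iIndepFun ξ P)
    (hbern : ∀ i, P {ω | ξ i ω = true} = ENNReal.ofReal q)
    (M : ℝ) (hM : 1 ≤ M)
    (k : ℕ) (hk1 : 1 ≤ k) (hk2 : k ≤ n - 1) :
    P[fun ω => (Vcount ξ k ω : ℝ) / (M + k - Vcount ξ k ω) | revFilt ξ (k + 1)]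
      ≤ᵐ[P] fun ω => (Vcount ξ (k + 1) ω : ℝ) / (M + (k + 1) - Vcount ξ (k + 1) ω) :=
  stmt14_general P n hn q ξ hmeas hindep hbern M hM k hk2
end

section
/- Let n ≥ 1 and let ξ₁, …, ξ_n be i.i.d. Bernoulli(1/2) random variables, with V_k = Σ_{j=1}^k ξ_j. Let T be any reverse stopping time with values in {1, …, n}, i.e. {T = k} ∈ G_k for every k, where G_k = σ(V_j : k ≤ j ≤ n). Then E[ V_T / (1 + T − V_T) ] ≤ 1. -/
open MeasureTheory ProbabilityTheory Finset
open scoped ENNReal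

/-!
Since `{T = k}` depends only on `(V_j)_{j ≥ k}`, `T` is a function `τ` of the coin vector, whose
law is uniform on `{0,1}^n`; so it suffices to show `∑_b V_τ(b) / (1 + Ṽ_τ(b)) ≤ 2^n`.
Split `V_τ / (1 + Ṽ_τ)` into a weight `(1 + Ṽ_τ)⁻¹` for each one-bit of `b` below `τ(b)` and move
that weight to the point `b'` where the bit is switched off. The points feeding a given `b'`
agree on `V_j` for `j ≥ τ`, hence all stop at the same `k`; each then carries the weight
`1 / #{zeros of b' below k}`, and there are at most that many of them, so `b'` receives at most `1`.
-/

open Function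

namespace BoolCube

variable {n : ℕ}

def onesBelow (k : ℕ) (b : Fin n → Bool) : ℕ := #{j : Fin n | (j : ℕ) < k ∧ b j = true}

def zerosBelow (k : ℕ) (b : Fin n → Bool) : Finset (Fin n) := {j | (j : ℕ) < k ∧ b j = false}

lemma onesBelow_add_card_zerosBelow (k : ℕ) (b : Fin n → Bool) :
    onesBelow k b + #(zerosBelow k b) = min n k := by
  rw [← Fin.card_filter_val_lt, ← card_filter_add_card_filter_not (s := {j : Fin n | j < k})
    (fun j => b j = true), filter_filter, filter_filter]
  simp only [onesBelow, zerosBelow, Bool.not_eq_true]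

lemma onesBelow_le (k : ℕ) (b : Fin n → Bool) : onesBelow k b ≤ k := by
  have := onesBelow_add_card_zerosBelow k b
  omega

/-- `V_τ / (1 + Ṽ_τ)` at the point `b` of the cube. -/
noncomputable def stoppedRatio (τ : (Fin n → Bool) → ℕ) (b : Fin n → Bool) : ℝ :=
  onesBelow (τ b) b / (1 + τ b - onesBelow (τ b) b)

lemma stoppedRatio_nonneg (τ : (Fin n → Bool) → ℕ) (b : Fin n → Bool) :
    0 ≤ stoppedRatio τ b := by
  have : (onesBelow (τ b) b : ℝ) ≤ τ b := by exact_mod_cast onesBelow_le _ b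
  exact div_nonneg (Nat.cast_nonneg _) (by linarith)

/-- The mass `(1 + Ṽ_τ)⁻¹` that each one-bit below `τ` contributes to `stoppedRatio`. -/
noncomputable def stoppedWeight (τ : (Fin n → Bool) → ℕ) (b : Fin n → Bool) : ℝ :=
  (1 + τ b - onesBelow (τ b) b)⁻¹

lemma onesBelow_update_true {k : ℕ} {b : Fin n → Bool} {i : Fin n} (hik : (i : ℕ) < k)
    (hb : b i = false) : onesBelow k (update b i true) = onesBelow k b + 1 := by
  have hset : univ.filter (fun j : Fin n => (j : ℕ) < k ∧ update b i true j = true) =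
      insert i (univ.filter fun j : Fin n => (j : ℕ) < k ∧ b j = true) := by
    ext j
    rcases eq_or_ne j i with rfl | hj
    · simp [hik]
    · simp [hj]
  rw [onesBelow, hset, card_insert_of_notMem (by simp [hb]), onesBelow]

lemma sum_sum_true_eq_sum_sum_false {M : Type*} [AddCommMonoid M]
    (f : (Fin n → Bool) → Fin n → M) :
    ∑ b, ∑ i with b i = true, f b i = ∑ b, ∑ i with b i = false, f (update b i true) i := by
  simp_rw [sum_filter]
  rw [sum_comm, eq_comm, sum_comm]
  refine sum_congr rfl fun i _ => ?_
  rw [← sum_filter, ← sum_filter]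
  refine sum_nbij' (fun b => update b i true) (fun b => update b i false) ?_ ?_ ?_ ?_ ?_ <;>
    simp +contextual [update_idem, update_eq_self_iff]

/-- The cube version of `{T = k} ∈ G_k`. -/
def IsReverseStopping (τ : (Fin n → Bool) → ℕ) : Prop :=
  ∀ k b b', (∀ j, k ≤ j → onesBelow j b = onesBelow j b') → τ b = k → τ b' = k

namespace IsReverseStopping

variable {τ : (Fin n → Bool) → ℕ}

lemma eq_of_update (hτ : IsReverseStopping τ) {b : Fin n → Bool} {i j : Fin n}
    (hbi : b i = false) (hbj : b j = false) (hi : (i : ℕ) < τ (update b i true))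
    (hj : (j : ℕ) < τ (update b j true)) : τ (update b i true) = τ (update b j true) := by
  wlog hle : τ (update b i true) ≤ τ (update b j true) generalizing i j
  · exact (this hbj hbi hj hi (le_of_not_ge hle)).symm
  refine hτ _ (update b j true) _ (fun l hl => ?_) rfl
  rw [onesBelow_update_true (by omega) hbj, onesBelow_update_true (by omega) hbi]

lemma sum_update_le_one (hτ : IsReverseStopping τ) (hτn : ∀ b, τ b ≤ n) (b : Fin n → Bool) :
    ∑ i with b i = false,
      (if (i : ℕ) < τ (update b i true) then stoppedWeight τ (update b i true) else 0) ≤ 1 := by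
  rw [← sum_filter, filter_filter]
  set S : Finset (Fin n) := {i | b i = false ∧ (i : ℕ) < τ (update b i true)}
  have hmemS (i : Fin n) : i ∈ S ↔ b i = false ∧ (i : ℕ) < τ (update b i true) := by simp [S]
  rcases S.eq_empty_or_nonempty with hS | ⟨i₀, hi₀⟩
  · simp [hS]
  obtain ⟨hbi₀, hi₀τ⟩ := (hmemS i₀).1 hi₀
  set k := τ (update b i₀ true)
  have hτS : ∀ i ∈ S, τ (update b i true) = k := fun i hi =>
    hτ.eq_of_update ((hmemS i).1 hi).1 hbi₀ ((hmemS i).1 hi).2 hi₀τ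
  have hSZ : S ⊆ zerosBelow k b := fun i hi => by
    obtain ⟨hbi, hiτ⟩ := (hmemS i).1 hi
    simpa [zerosBelow, hbi, ← hτS i hi] using hiτ
  have hZ : (onesBelow k b : ℝ) + #(zerosBelow k b) = k := by
    exact_mod_cast (onesBelow_add_card_zerosBelow k b).trans (min_eq_right (hτn _))
  have hw : ∀ i ∈ S, stoppedWeight τ (update b i true) = (#(zerosBelow k b) : ℝ)⁻¹ := by
    intro i hi
    obtain ⟨hbi, hiτ⟩ := (hmemS i).1 hi
    rw [hτS i hi] at hiτ
    rw [stoppedWeight, hτS i hi, onesBelow_update_true hiτ hbi]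
    push_cast
    congr 1
    linarith
  have hZpos : (0 : ℝ) < #(zerosBelow k b) := by exact_mod_cast card_pos.2 ⟨i₀, hSZ hi₀⟩
  calc ∑ i ∈ S, stoppedWeight τ (update b i true) = #S * (#(zerosBelow k b) : ℝ)⁻¹ := by
        rw [sum_congr rfl hw, sum_const, nsmul_eq_mul]
    _ ≤ #(zerosBelow k b) * (#(zerosBelow k b) : ℝ)⁻¹ := by gcongr
    _ = 1 := mul_inv_cancel₀ hZpos.ne'

theorem sum_stoppedRatio_le (hτ : IsReverseStopping τ) (hτn : ∀ b, τ b ≤ n) :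
    ∑ b, stoppedRatio τ b ≤ 2 ^ n :=
  calc ∑ b, stoppedRatio τ b
      = ∑ b, ∑ i : Fin n with b i = true, if (i : ℕ) < τ b then stoppedWeight τ b else 0 := by
        refine sum_congr rfl fun b _ => ?_
        rw [stoppedRatio, div_eq_mul_inv, sum_ite, sum_const_zero, add_zero, sum_const,
          filter_filter, nsmul_eq_mul]
        simp only [onesBelow, and_comm, stoppedWeight]
    _ = ∑ b, ∑ i : Fin n with b i = false,
          if (i : ℕ) < τ (update b i true) then stoppedWeight τ (update b i true) else 0 :=
        sum_sum_true_eq_sum_sum_false _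
    _ ≤ ∑ _b : Fin n → Bool, (1 : ℝ) := sum_le_sum fun b _ => hτ.sum_update_le_one hτn b
    _ = 2 ^ n := by simp

end IsReverseStopping

end BoolCube

open BoolCube

section ReverseFiltration

variable {Ω : Type*} [MeasurableSpace Ω] {n : ℕ} (ξ : Fin n → Ω → Bool)

lemma revFilt_le_comap (k : ℕ) :
    revFilt ξ k ≤
      MeasurableSpace.comap (fun ω (j : ℕ) => Vcount ξ (k + j) ω) MeasurableSpace.pi := by
  refine iSup₂_le fun j hj => ?_
  have hj : j = k + (j - k) := by have := (mem_Icc.1 hj).1; omega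
  rw [hj, show (fun ω => Vcount ξ (k + (j - k)) ω) =
      (fun v : ℕ → ℕ => v (j - k)) ∘ (fun ω (j : ℕ) => Vcount ξ (k + j) ω) from rfl,
    ← MeasurableSpace.comap_comp]
  exact MeasurableSpace.comap_mono (measurable_pi_apply _).comap_le

variable {ξ}

lemma mem_iff_mem_of_measurableSet_revFilt {k : ℕ} {S : Set Ω}
    (hS : MeasurableSet[revFilt ξ k] S) {ω ω' : Ω}
    (h : ∀ j, k ≤ j → Vcount ξ j ω = Vcount ξ j ω') : ω ∈ S ↔ ω' ∈ S := by
  obtain ⟨C, -, rfl⟩ := revFilt_le_comap ξ k S hS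
  simp only [Set.mem_preimage, funext fun j => h (k + j) (Nat.le_add_right k j)]

lemma exists_isReverseStopping_comp {T : Ω → ℕ}
    (hT : ∀ k, MeasurableSet[revFilt ξ k] {ω | T ω = k})
    (hsurj : Surjective fun ω i => ξ i ω) :
    ∃ τ : (Fin n → Bool) → ℕ, IsReverseStopping τ ∧ T = τ ∘ fun ω i => ξ i ω := by
  obtain ⟨sec, hsec⟩ := hsurj.hasRightInverse
  replace hsec (c : Fin n → Bool) : (fun i => ξ i (sec c)) = c := hsec c
  refine ⟨T ∘ sec, fun k b b' h hb => ?_, funext fun ω => ?_⟩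
  · refine (mem_iff_mem_of_measurableSet_revFilt (hT k) fun j hj => ?_).1 hb
    change onesBelow j (fun i => ξ i (sec b)) = onesBelow j (fun i => ξ i (sec b'))
    rw [hsec b, hsec b']
    exact h j hj
  · refine ((mem_iff_mem_of_measurableSet_revFilt (hT (T ω)) fun j _ => ?_).1 rfl).symm
    change onesBelow j (fun i => ξ i ω) = onesBelow j (fun i => ξ i (sec _))
    rw [hsec]

end ReverseFiltration

section FairCoins

variable {Ω : Type*} [MeasurableSpace Ω] {P : Measure Ω} [IsProbabilityMeasure P]

lemma measure_preimage_singleton_eq_inv_two {X : Ω → Bool} (hX : Measurable X)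
    (htrue : P {ω | X ω = true} = 2⁻¹) (c : Bool) : P (X ⁻¹' {c}) = 2⁻¹ := by
  have hm : MeasurableSet {ω | X ω = true} := hX (measurableSet_singleton true)
  cases c
  · rw [show X ⁻¹' {false} = {ω | X ω = true}ᶜ by ext; simp,
      measure_compl hm (measure_ne_top _ _), measure_univ,
      htrue, ENNReal.one_sub_inv_two]
  · exact htrue

variable {n : ℕ} {ξ : Fin n → Ω → Bool}

lemma measure_map_singleton_eq_inv_two_pow (hmeas : ∀ i, Measurable (ξ i))
    (hindep : iIndepFun ξ P) (htrue : ∀ i, P {ω | ξ i ω = true} = 2⁻¹) (b : Fin n → Bool) :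
    P.map (fun ω i => ξ i ω) {b} = 2⁻¹ ^ n := by
  rw [Measure.map_apply (measurable_pi_lambda _ hmeas) (measurableSet_singleton b),
    show (fun ω i => ξ i ω) ⁻¹' {b} = ⋂ i, ξ i ⁻¹' {b i} by ext; simp [funext_iff],
    hindep.meas_iInter fun i => ⟨{b i}, measurableSet_singleton _, rfl⟩]
  simp [measure_preimage_singleton_eq_inv_two (hmeas _) (htrue _)]

lemma surjective_of_measure_map_singleton_eq_inv_two_pow (hmeas : ∀ i, Measurable (ξ i))
    (hindep : iIndepFun ξ P) (htrue : ∀ i, P {ω | ξ i ω = true} = 2⁻¹) :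
    Surjective fun ω i => ξ i ω := fun b => by
  by_contra! h
  have := measure_map_singleton_eq_inv_two_pow hmeas hindep htrue b
  rw [Measure.map_apply (measurable_pi_lambda _ hmeas) (measurableSet_singleton b),
    Set.preimage_singleton_eq_empty.2 (by simpa using h), measure_empty] at this
  exact pow_ne_zero n (by simp) this.symm

end FairCoins

theorem stmt16_general {Ω : Type*} [MeasurableSpace Ω] (P : Measure Ω) [IsProbabilityMeasure P]
    (n : ℕ)
    (ξ : Fin n → Ω → Bool) (hmeas : ∀ i, Measurable (ξ i))
    (hindep : iIndepFun ξ P)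
    (hbern : ∀ i, P {ω | ξ i ω = true} = ENNReal.ofReal (1 / 2))
    (T : Ω → ℕ) (hTval : ∀ ω, T ω ∈ Finset.Icc 1 n)
    (hTstop : ∀ k, MeasurableSet[revFilt ξ k] {ω | T ω = k}) :
    ∫⁻ ω, ENNReal.ofReal
        ((Vcount ξ (T ω) ω : ℝ) / (1 + T ω - Vcount ξ (T ω) ω)) ∂P
      ≤ 1 := by
  set X : Ω → (Fin n → Bool) := fun ω i => ξ i ω
  have htrue : ∀ i, P {ω | ξ i ω = true} = 2⁻¹ := by
    simpa [one_div, ENNReal.ofReal_inv_of_pos] using hbern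
  have hsurj : Surjective X := surjective_of_measure_map_singleton_eq_inv_two_pow hmeas hindep htrue
  obtain ⟨τ, hτ, rfl⟩ := exists_isReverseStopping_comp hTstop hsurj
  have hτn (b : Fin n → Bool) : τ b ≤ n := by
    obtain ⟨ω, rfl⟩ := hsurj b
    exact (mem_Icc.1 (hTval ω)).2
  change ∫⁻ ω, ENNReal.ofReal (stoppedRatio τ (X ω)) ∂P ≤ 1
  calc ∫⁻ ω, ENNReal.ofReal (stoppedRatio τ (X ω)) ∂P
      = ∫⁻ b, ENNReal.ofReal (stoppedRatio τ b) ∂P.map X :=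
        (lintegral_map (f := fun b => ENNReal.ofReal (stoppedRatio τ b))
          (measurable_of_countable _) (measurable_pi_lambda _ hmeas)).symm
    _ = ENNReal.ofReal (∑ b, stoppedRatio τ b) * 2⁻¹ ^ n := by
        rw [lintegral_fintype, ENNReal.ofReal_sum_of_nonneg fun b _ => stoppedRatio_nonneg τ b,
          sum_mul]
        simp only [X, measure_map_singleton_eq_inv_two_pow hmeas hindep htrue]
    _ ≤ ENNReal.ofReal (2 ^ n) * 2⁻¹ ^ n := by gcongr; exact hτ.sum_stoppedRatio_le hτn
    _ = 1 := by
        rw [ENNReal.ofReal_pow zero_le_two, ENNReal.ofReal_ofNat, ← mul_pow,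
          ENNReal.mul_inv_cancel two_ne_zero ENNReal.ofNat_ne_top, one_pow]

/-- optional-stopping bound in the symmetric case. For i.i.d.
Bernoulli(1/2) variables and any reverse stopping time `T` with values in `{1, …, n}`,
`E[V_T/(1 + T − V_T)] ≤ 1`. -/
theorem stmt16 {Ω : Type*} [MeasurableSpace Ω] (P : Measure Ω) [IsProbabilityMeasure P]
    (n : ℕ) (hn : 1 ≤ n)
    (ξ : Fin n → Ω → Bool) (hmeas : ∀ i, Measurable (ξ i))
    (hindep : iIndepFun ξ P)
    (hbern : ∀ i, P {ω | ξ i ω = true} = ENNReal.ofReal (1 / 2))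
    (T : Ω → ℕ) (hTval : ∀ ω, T ω ∈ Finset.Icc 1 n)
    (hTstop : ∀ k, MeasurableSet[revFilt ξ k] {ω | T ω = k}) :
    ∫⁻ ω, ENNReal.ofReal
        ((Vcount ξ (T ω) ω : ℝ) / (1 + T ω - Vcount ξ (T ω) ω)) ∂P
      ≤ 1 :=
  stmt16_general P n ξ hmeas hindep hbern T hTval hTstop
end

section
/- Let E be a nonnegative real random variable and c a strictly positive real random variable, and let U be uniformly distributed on (0, 1) and independent of the pair (E, c). Then the stochastically rounded variable has the same expectation as E: E[ E·1{E ≥ c} + c·1{E < c}·1{U·c ≤ E} ] = E[E], where both sides are Lebesgue integrals of nonnegative random variables valued in [0, ∞]. -/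
open MeasureTheory ProbabilityTheory
open scoped ENNReal

lemma inner_unif (e c' : ℝ) (he : 0 ≤ e) (hc' : 0 < c') :
    ∫⁻ u, ENNReal.ofReal
        (c' * (if e < c' then 1 else 0) * (if u * c' ≤ e then 1 else 0))
        ∂((volume : Measure ℝ).restrict (Set.Ioo 0 1))
      = ENNReal.ofReal (e * (if e < c' then 1 else 0)) := by
  by_cases h : e < c'
  · simp only [if_pos h, mul_one]
    have hpt : ∀ u : ℝ, ENNReal.ofReal (c' * (if u * c' ≤ e then (1:ℝ) else 0)) =
        Set.indicator (Set.Iic (e / c')) (fun _ => ENNReal.ofReal c') u := by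
      intro u
      have : u * c' ≤ e ↔ u ≤ e / c' := (le_div_iff₀ hc').symm
      by_cases hu : u ≤ e / c'
      · simp [Set.indicator_apply, hu, this.mpr hu]
      · rw [if_neg (fun hx => hu (this.mp hx))]
        simp [Set.indicator_apply, hu]
    rw [lintegral_congr hpt, lintegral_indicator measurableSet_Iic _,
      lintegral_const, Measure.restrict_restrict measurableSet_Iic]
    have hdiv0 : 0 ≤ e / c' := div_nonneg he hc'.le
    have hdiv1 : e / c' < 1 := (div_lt_one hc').mpr h
    have hIoc : Set.Iic (e / c') ∩ Set.Ioo 0 1 = Set.Ioc 0 (e / c') := by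
      ext x
      simp only [Set.mem_inter_iff, Set.mem_Iic, Set.mem_Ioo, Set.mem_Ioc]
      constructor
      · rintro ⟨h1, h2, h3⟩; exact ⟨h2, h1⟩
      · rintro ⟨h1, h2⟩; exact ⟨h2, h1, lt_of_le_of_lt h2 hdiv1⟩
    rw [hIoc, Measure.restrict_apply_univ, Real.volume_Ioc, ← ENNReal.ofReal_mul hc'.le, sub_zero,
      mul_div_cancel₀ e hc'.ne']
  · simp [h]

/-- expectation preservation of stochastic rounding. If `U ~ Unif(0,1)` is
independent of the pair `(E, c)`, with `E ≥ 0` and `c > 0`, then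
`E[E·1{E ≥ c} + c·1{E < c}·1{U·c ≤ E}] = E[E]` (both sides Lebesgue integrals in `[0,∞]`). -/
theorem stmt17 {Ω : Type*} [MeasurableSpace Ω] (P : Measure Ω) [IsProbabilityMeasure P]
    (E c U : Ω → ℝ) (hE : Measurable E) (hc : Measurable c) (hU : Measurable U)
    (hEnn : ∀ ω, 0 ≤ E ω) (hcpos : ∀ ω, 0 < c ω)
    (hUunif : Measure.map U P = (volume : Measure ℝ).restrict (Set.Ioo 0 1))
    (hindep : IndepFun U (fun ω => (E ω, c ω)) P) :
    ∫⁻ ω, ENNReal.ofReal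
        (E ω * (if c ω ≤ E ω then 1 else 0) +
          c ω * (if E ω < c ω then 1 else 0) * (if U ω * c ω ≤ E ω then 1 else 0)) ∂P
      = ∫⁻ ω, ENNReal.ofReal (E ω) ∂P := by
  have hEc : Measurable (fun ω => (E ω, c ω)) := hE.prodMk hc
  -- split the sum
  have hsplit : ∀ ω, ENNReal.ofReal
        (E ω * (if c ω ≤ E ω then 1 else 0) +
          c ω * (if E ω < c ω then 1 else 0) * (if U ω * c ω ≤ E ω then 1 else 0))
      = ENNReal.ofReal (E ω * (if c ω ≤ E ω then 1 else 0)) +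
        ENNReal.ofReal (c ω * (if E ω < c ω then 1 else 0) * (if U ω * c ω ≤ E ω then 1 else 0)) := by
    intro ω
    rw [ENNReal.ofReal_add]
    · exact mul_nonneg (hEnn ω) (by split <;> norm_num)
    · apply mul_nonneg (mul_nonneg (hcpos ω).le (by split <;> norm_num))
      split <;> norm_num
  simp only [hsplit]
  rw [lintegral_add_left]
  swap
  · apply Measurable.ennreal_ofReal
    exact hE.mul (Measurable.ite (measurableSet_le hc hE) measurable_const measurable_const)
  -- compute the second integral
  have hmap : Measure.map (fun ω => ((E ω, c ω), U ω)) P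
      = (Measure.map (fun ω => (E ω, c ω)) P).prod (Measure.map U P) := by
    have := (indepFun_iff_map_prod_eq_prod_map_map hEc.aemeasurable hU.aemeasurable).mp
      hindep.symm
    exact this
  set μEc := Measure.map (fun ω => (E ω, c ω)) P with hμEc
  haveI : IsProbabilityMeasure μEc := Measure.isProbabilityMeasure_map hEc.aemeasurable
  have hF : Measurable (fun p : (ℝ × ℝ) × ℝ => ENNReal.ofReal
      (p.1.2 * (if p.1.1 < p.1.2 then 1 else 0) * (if p.2 * p.1.2 ≤ p.1.1 then 1 else 0))) := by
    apply Measurable.ennreal_ofReal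
    apply Measurable.mul
    · apply Measurable.mul (measurable_snd.comp measurable_fst)
      exact Measurable.ite (measurableSet_lt (measurable_fst.comp measurable_fst)
        (measurable_snd.comp measurable_fst)) measurable_const measurable_const
    · exact Measurable.ite (measurableSet_le
        (measurable_snd.mul (measurable_snd.comp measurable_fst))
        (measurable_fst.comp measurable_fst)) measurable_const measurable_const
  have key : ∫⁻ ω, ENNReal.ofReal
      (c ω * (if E ω < c ω then 1 else 0) * (if U ω * c ω ≤ E ω then 1 else 0)) ∂P
      = ∫⁻ ω, ENNReal.ofReal (E ω * (if E ω < c ω then 1 else 0)) ∂P := by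
    have h1 : ∫⁻ ω, ENNReal.ofReal
        (c ω * (if E ω < c ω then 1 else 0) * (if U ω * c ω ≤ E ω then 1 else 0)) ∂P
        = ∫⁻ p, ENNReal.ofReal
            (p.1.2 * (if p.1.1 < p.1.2 then 1 else 0) * (if p.2 * p.1.2 ≤ p.1.1 then 1 else 0))
            ∂(Measure.map (fun ω => ((E ω, c ω), U ω)) P) := by
      rw [lintegral_map hF (hEc.prodMk hU)]
    rw [h1, hmap, hUunif]
    rw [lintegral_prod _ hF.aemeasurable]
    have hae : ∀ᵐ p ∂μEc, 0 ≤ p.1 ∧ 0 < p.2 := by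
      rw [hμEc, ae_map_iff hEc.aemeasurable]
      · filter_upwards with ω using ⟨hEnn ω, hcpos ω⟩
      · exact (measurableSet_le measurable_const measurable_fst).inter
          (measurableSet_lt measurable_const measurable_snd)
    have h2 : ∫⁻ p, (∫⁻ u, ENNReal.ofReal
          (p.2 * (if p.1 < p.2 then 1 else 0) * (if u * p.2 ≤ p.1 then 1 else 0))
          ∂((volume : Measure ℝ).restrict (Set.Ioo 0 1))) ∂μEc
        = ∫⁻ p, ENNReal.ofReal (p.1 * (if p.1 < p.2 then 1 else 0)) ∂μEc := by
      apply lintegral_congr_ae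
      filter_upwards [hae] with p hp
      exact inner_unif p.1 p.2 hp.1 hp.2
    rw [h2, hμEc]
    rw [lintegral_map _ hEc]
    apply Measurable.ennreal_ofReal
    exact measurable_fst.mul
      (Measurable.ite (measurableSet_lt measurable_fst measurable_snd)
        measurable_const measurable_const)
  rw [key, ← lintegral_add_left]
  · apply lintegral_congr
    intro ω
    rw [← ENNReal.ofReal_add (mul_nonneg (hEnn ω) (by split <;> norm_num))
      (mul_nonneg (hEnn ω) (by split <;> norm_num))]
    congr 1
    by_cases h : c ω ≤ E ω
    · simp [h, not_lt.mpr h]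
    · simp [h, lt_of_not_ge h]
  · apply Measurable.ennreal_ofReal
    exact hE.mul (Measurable.ite (measurableSet_le hc hE) measurable_const measurable_const)
end
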